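/- arXiv:1612.03300 — 7 statements merged into one kernel-verified Lean document; each statement's English description precedes it below -/
import Mathlib

section
/- Let A, B ∈ ℂ^{n×n} be such that the pencil zB − A is regular, i.e., there exists z₀ ∈ ℂ with det(z₀B − A) ≠ 0. Then there exist an integer d with 0 ≤ d ≤ n, invertible matrices S, T ∈ ℂ^{n×n}, an upper triangular matrix J ∈ ℂ^{d×d}, and a nilpotent upper triangular matrix N ∈ ℂ^{(n−d)×(n−d)} such that T·A·S equals the block diagonal matrix diag(J, I_{n−d}) and T·B·S equals the block diagonal matrix diag(I_d, N). -/
/-!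
Choose `z₀` with `K = z₀B - A` invertible and put `C = K⁻¹B`, so that `K⁻¹A = z₀C - 1`.
Triangularize `C` by a similarity that lists its nonzero eigenvalues first:
`C ~ [[U, W], [0, N₀]]` with `U` invertible upper triangular and `N₀` strictly upper
triangular, hence nilpotent. Because `N₀` is nilpotent, the Sylvester equation `UX - XN₀ = W`
has the finite solution `X = ∑ₖ U⁻⁽ᵏ⁺¹⁾ W N₀ᵏ`, and conjugating by `[[1, -X], [0, 1]]` removes
`W`. Then `K⁻¹A ~ diag(z₀U - 1, z₀N₀ - 1)`, and multiplying on the left by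
`diag(U⁻¹, (z₀N₀ - 1)⁻¹)` yields `diag(z₀ - U⁻¹, 1)` and `diag(1, (z₀N₀ - 1)⁻¹N₀)`.
-/

open Matrix Polynomial

def finSumSubEquiv {d n : ℕ} (hd : d ≤ n) : Fin d ⊕ Fin (n - d) ≃ Fin n :=
  finSumFinEquiv.trans (finCongr (Nat.add_sub_cancel' hd))

section FinSumSub

variable {d n : ℕ} (hd : d ≤ n)

@[simp] theorem val_finSumSubEquiv_inl (i : Fin d) : (finSumSubEquiv hd (.inl i) : ℕ) = i := rfl

@[simp] theorem val_finSumSubEquiv_inr (i : Fin (n - d)) :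
    (finSumSubEquiv hd (.inr i) : ℕ) = d + i := rfl

theorem strictMono_finSumSubEquiv_inl : StrictMono (finSumSubEquiv hd ∘ Sum.inl) :=
  fun _ _ hij => Fin.lt_def.mpr hij

theorem strictMono_finSumSubEquiv_inr : StrictMono (finSumSubEquiv hd ∘ Sum.inr) :=
  fun _ _ hij => Fin.lt_def.mpr (Nat.add_lt_add_left hij d)

end FinSumSub

namespace Matrix

theorem IsUpperTriangular.submatrix_of_strictMono {α m n : Type*} [Zero α] [Preorder m] [Preorder n]
    {M : Matrix n n α} (h : M.IsUpperTriangular) {f : m → n} (hf : StrictMono f) :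
    (M.submatrix f f).IsUpperTriangular :=
  fun _ _ hij => h (hf hij)

theorem IsUpperTriangular.smul {α R n : Type*} [LT n] [Zero α] [SMulZeroClass R α]
    {M : Matrix n n α} (h : M.IsUpperTriangular) (c : R) : (c • M).IsUpperTriangular :=
  fun i j hij => by simp [h hij]

section Triangular

variable {R : Type*} [CommRing R] {n : Type*} [Fintype n] [DecidableEq n] [LinearOrder n]
  {M : Matrix n n R}

theorem IsUpperTriangular.inv (h : M.IsUpperTriangular) : M⁻¹.IsUpperTriangular := by
  by_cases hM : IsUnit M.det
  · let _ := M.invertibleOfIsUnitDet hM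
    exact blockTriangular_inv_of_blockTriangular h
  · rw [nonsing_inv_apply_not_isUnit M hM]
    exact blockTriangular_zero

theorem IsUpperTriangular.isRoot_charpoly (h : M.IsUpperTriangular) (i : n) :
    M.charpoly.IsRoot (M i i) := by
  rw [charpoly_of_isUpperTriangular M h, IsRoot, eval_prod]
  exact Finset.prod_eq_zero (Finset.mem_univ i) (by simp)

theorem IsUpperTriangular.isUnit (h : M.IsUpperTriangular) (hdiag : ∀ i, IsUnit (M i i)) :
    IsUnit M := by
  rw [isUnit_iff_isUnit_det, det_of_isUpperTriangular h, IsUnit.prod_univ_iff]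
  exact hdiag

theorem IsUpperTriangular.isNilpotent (h : M.IsUpperTriangular) (hdiag : ∀ i, M i i = 0) :
    IsNilpotent M := by
  have hcp : M.charpoly = X ^ Fintype.card n := by
    simp [charpoly_of_isUpperTriangular M h, hdiag]
  exact ⟨Fintype.card n, by simpa [hcp] using M.aeval_self_charpoly⟩

end Triangular

theorem exists_mulVec_eq_smul_of_isRoot_charpoly {R n : Type*} [CommRing R] [IsDomain R]
    [Fintype n] [DecidableEq n] {M : Matrix n n R} {x : R} (hx : M.charpoly.IsRoot x) :
    ∃ v ≠ 0, M *ᵥ v = x • v := by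
  rw [IsRoot, eval_charpoly, ← exists_mulVec_eq_zero_iff] at hx
  obtain ⟨v, hv, hMv⟩ := hx
  refine ⟨v, hv, ?_⟩
  rw [sub_mulVec, sub_eq_zero] at hMv
  simpa using hMv.symm

theorem exists_isUnit_mulVec_single_eq {K n : Type*} [Field K] [Fintype n] [DecidableEq n]
    {v : n → K} (hv : v ≠ 0) (j : n) : ∃ Q : Matrix n n K, IsUnit Q ∧ Q *ᵥ Pi.single j 1 = v := by
  obtain ⟨i, hi⟩ := Function.ne_iff.mp hv
  refine ⟨((1 : Matrix n n K).updateCol i v).submatrix id (Equiv.swap j i), ?_, ?_⟩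
  · rw [isUnit_iff_isUnit_det, det_permute', ← cramer_apply, cramer_one]
    exact ((Units.isUnit _).map (Int.castRingHom K)).mul (Ne.isUnit hi)
  · ext k
    simp

section DiagCons

variable {R : Type*} [Semiring R] {m : ℕ}

def diagCons (a : R) (M : Matrix (Fin m) (Fin m) R) : Matrix (Fin (m + 1)) (Fin (m + 1)) R :=
  of (Fin.cons (Fin.cons a 0) fun i => Fin.cons 0 (M i))

variable {a b : R} {M P Q : Matrix (Fin m) (Fin m) R} {D : Matrix (Fin (m + 1)) (Fin (m + 1)) R}

@[simp] theorem diagCons_zero_zero : diagCons a M 0 0 = a := rfl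
@[simp] theorem diagCons_zero_succ (j : Fin m) : diagCons a M 0 j.succ = 0 := rfl
@[simp] theorem diagCons_succ_zero (i : Fin m) : diagCons a M i.succ 0 = 0 := rfl
@[simp] theorem diagCons_succ_succ (i j : Fin m) : diagCons a M i.succ j.succ = M i j := rfl

theorem diagCons_mul_diagCons : diagCons a P * diagCons b Q = diagCons (a * b) (P * Q) := by
  ext i j
  cases i using Fin.cases <;> cases j using Fin.cases <;> simp [mul_apply, Fin.sum_univ_succ]

theorem diagCons_one_one : diagCons 1 (1 : Matrix (Fin m) (Fin m) R) = 1 := by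
  ext i j
  cases i using Fin.cases <;> cases j using Fin.cases <;>
    simp [one_apply, (Fin.succ_ne_zero _).symm]

theorem diagCons_mul_mul_succ_succ (i j : Fin m) :
    (diagCons a P * D * diagCons b Q) i.succ j.succ =
      (P * D.submatrix Fin.succ Fin.succ * Q) i j := by
  simp [mul_apply, Fin.sum_univ_succ, Finset.sum_mul]

theorem diagCons_mul_mul_succ_zero (hD : ∀ i : Fin m, D i.succ 0 = 0) (i : Fin m) :
    (diagCons a P * D * diagCons b Q) i.succ 0 = 0 := by
  simp [mul_apply, Fin.sum_univ_succ, hD]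

theorem diagCons_mul_mul_zero_zero :
    (diagCons a P * D * diagCons b Q) 0 0 = a * D 0 0 * b := by
  simp [mul_apply, Fin.sum_univ_succ]

end DiagCons

section DiagConsInv

variable {R : Type*} [CommRing R] {m : ℕ} {Q : Matrix (Fin m) (Fin m) R}

theorem diagCons_one_inv_mul (hQ : IsUnit Q) : diagCons 1 Q⁻¹ * diagCons 1 Q = 1 := by
  rw [diagCons_mul_diagCons, nonsing_inv_mul Q ((isUnit_iff_isUnit_det Q).mp hQ), mul_one,
    diagCons_one_one]

theorem isUnit_diagCons_one (hQ : IsUnit Q) : IsUnit (diagCons 1 Q) :=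
  (isUnit_iff_isUnit_det _).mpr (isUnit_det_of_left_inverse (diagCons_one_inv_mul hQ))

theorem inv_diagCons_one (hQ : IsUnit Q) : (diagCons 1 Q)⁻¹ = diagCons 1 Q⁻¹ :=
  inv_eq_left_inv (diagCons_one_inv_mul hQ)

end DiagConsInv

theorem IsUpperTriangular.of_submatrix_succ {α : Type*} [Zero α] {m : ℕ}
    {M : Matrix (Fin (m + 1)) (Fin (m + 1)) α} (hcol : ∀ i : Fin m, M i.succ 0 = 0)
    (hsub : (M.submatrix Fin.succ Fin.succ).IsUpperTriangular) : M.IsUpperTriangular := by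
  intro i j hij
  cases j using Fin.cases with
  | zero =>
    obtain ⟨i, rfl⟩ := Fin.exists_succ_eq.mpr (Fin.pos_iff_ne_zero.mp hij)
    exact hcol i
  | succ j =>
    cases i using Fin.cases with
    | zero => exact absurd hij (Fin.not_lt_zero _)
    | succ i => exact hsub (Fin.succ_lt_succ_iff.mp hij)

section Triangularization

variable {K : Type*} [Field K]

theorem exists_isUnit_conj_mulVec_single_eq {n : Type*} [Fintype n] [DecidableEq n]
    {M : Matrix n n K} {x : K} (hx : M.charpoly.IsRoot x) (j : n) :
    ∃ Q : Matrix n n K, IsUnit Q ∧ (Q⁻¹ * M * Q) *ᵥ Pi.single j 1 = x • Pi.single j 1 := by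
  obtain ⟨v, hv, hMv⟩ := exists_mulVec_eq_smul_of_isRoot_charpoly hx
  obtain ⟨Q, hQ, hQv⟩ := exists_isUnit_mulVec_single_eq hv j
  have hQinv : Q⁻¹ *ᵥ v = Pi.single j 1 := by
    rw [← hQv, mulVec_mulVec, nonsing_inv_mul Q ((isUnit_iff_isUnit_det Q).mp hQ), one_mulVec]
  refine ⟨Q, hQ, ?_⟩
  rw [← mulVec_mulVec, ← mulVec_mulVec, hQv, hMv, mulVec_smul, hQinv]

theorem exists_isUnit_conj_isUpperTriangular_sorted [IsAlgClosed K] (p : K → Prop) :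
    ∀ {m : ℕ} (M : Matrix (Fin m) (Fin m) K), ∃ (Q : Matrix (Fin m) (Fin m) K) (d : ℕ),
      IsUnit Q ∧ d ≤ m ∧ (Q⁻¹ * M * Q).IsUpperTriangular ∧
      ∀ i, p ((Q⁻¹ * M * Q) i i) ↔ (i : ℕ) < d
  | 0, _ => ⟨1, 0, isUnit_one, le_rfl, fun i => i.elim0, fun i => i.elim0⟩
  | m + 1, M => by
    -- Peel off eigenvalues satisfying `p` while there are any; once there are none, the diagonal
    -- of any triangular form consists of eigenvalues, so no entry satisfies `p`.
    obtain ⟨x, hx, hpx⟩ :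
        ∃ x, M.charpoly.IsRoot x ∧ (p x ∨ ∀ y, M.charpoly.IsRoot y → ¬ p y) := by
      by_cases h : ∃ x, M.charpoly.IsRoot x ∧ p x
      · obtain ⟨x, hx, hpx⟩ := h
        exact ⟨x, hx, .inl hpx⟩
      · push Not at h
        obtain ⟨x, hx⟩ := IsAlgClosed.exists_root M.charpoly (by
          rw [charpoly_degree_eq_dim, Fintype.card_fin]; exact_mod_cast m.succ_ne_zero)
        exact ⟨x, hx, .inr h⟩
    obtain ⟨Q₁, hQ₁, hM⟩ := exists_isUnit_conj_mulVec_single_eq hx 0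
    set D := Q₁⁻¹ * M * Q₁
    have hD0 : D 0 0 = x := by simpa using congrFun hM 0
    have hDsucc : ∀ i : Fin m, D i.succ 0 = 0 := fun i => by simpa using congrFun hM i.succ
    obtain ⟨Q', d, hQ', hd, htri, hsorted⟩ :=
      exists_isUnit_conj_isUpperTriangular_sorted p (D.submatrix Fin.succ Fin.succ)
    have hQ : IsUnit (Q₁ * diagCons 1 Q') := hQ₁.mul (isUnit_diagCons_one hQ')
    have hconj : (Q₁ * diagCons 1 Q')⁻¹ * M * (Q₁ * diagCons 1 Q') =
        diagCons 1 Q'⁻¹ * D * diagCons 1 Q' := by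
      rw [Matrix.mul_inv_rev, inv_diagCons_one hQ']
      simp only [D, Matrix.mul_assoc]
    have htri' : ((Q₁ * diagCons 1 Q')⁻¹ * M * (Q₁ * diagCons 1 Q')).IsUpperTriangular := by
      rw [hconj]
      refine .of_submatrix_succ (diagCons_mul_mul_succ_zero hDsucc) fun i j hij => ?_
      simpa [diagCons_mul_mul_succ_succ] using htri hij
    rcases hpx with hpx | hnone
    · refine ⟨_, d + 1, hQ, by omega, htri', fun i => ?_⟩
      rw [hconj]
      cases i using Fin.cases with
      | zero => simp [diagCons_mul_mul_zero_zero, hD0, hpx]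
      | succ i => simp [diagCons_mul_mul_succ_succ, hsorted i]
    · refine ⟨_, 0, hQ, by omega, htri', fun i => iff_of_false (hnone _ ?_) (Nat.not_lt_zero _)⟩
      have := htri'.isRoot_charpoly i
      rwa [← hQ.unit_spec, charpoly_units_conj'] at this

end Triangularization

theorem eq_reindex_fromBlocks_submatrix {α ι m o : Type*} [Zero α] (e : m ⊕ o ≃ ι)
    {M : Matrix ι ι α} (h : ∀ i j, M (e (.inr i)) (e (.inl j)) = 0) :
    M = reindex e e (fromBlocks (M.submatrix (e ∘ .inl) (e ∘ .inl))
      (M.submatrix (e ∘ .inl) (e ∘ .inr)) 0 (M.submatrix (e ∘ .inr) (e ∘ .inr))) := by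
  ext i j
  obtain ⟨i, rfl⟩ := e.surjective i
  obtain ⟨j, rfl⟩ := e.surjective j
  rcases i with i | i <;> rcases j with j | j <;> simp [h]

section Sylvester

variable {R : Type*} [CommRing R] {m o : Type*} [Fintype m] [DecidableEq m] [Fintype o]
  [DecidableEq o] {U : Matrix m m R} {N : Matrix o o R}

theorem exists_mul_sub_mul_eq (hU : IsUnit U) (hN : IsNilpotent N) (W : Matrix m o R) :
    ∃ X : Matrix m o R, U * X - X * N = W := by
  obtain ⟨k, hk⟩ := hN
  have hUU : U * U⁻¹ = 1 := mul_nonsing_inv U ((isUnit_iff_isUnit_det U).mp hU)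
  refine ⟨∑ i ∈ Finset.range k, U⁻¹ ^ (i + 1) * W * N ^ i, ?_⟩
  calc U * ∑ i ∈ Finset.range k, U⁻¹ ^ (i + 1) * W * N ^ i
        - (∑ i ∈ Finset.range k, U⁻¹ ^ (i + 1) * W * N ^ i) * N
      = ∑ i ∈ Finset.range k, (U⁻¹ ^ i * W * N ^ i - U⁻¹ ^ (i + 1) * W * N ^ (i + 1)) := by
        rw [Matrix.mul_sum, Matrix.sum_mul, ← Finset.sum_sub_distrib]
        refine Finset.sum_congr rfl fun i _ => ?_
        rw [pow_succ' U⁻¹, pow_succ N, ← Matrix.mul_assoc, ← Matrix.mul_assoc, ← Matrix.mul_assoc,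
          hUU, Matrix.one_mul, Matrix.mul_assoc _ _ N]
    _ = W := by rw [Finset.sum_range_sub', hk]; simp

theorem exists_isUnit_conj_fromBlocks_eq (hU : IsUnit U) (hN : IsNilpotent N)
    (W : Matrix m o R) :
    ∃ Z, IsUnit Z ∧ Z⁻¹ * fromBlocks U W 0 N * Z = fromBlocks U 0 0 N := by
  obtain ⟨X, hX⟩ := exists_mul_sub_mul_eq hU hN W
  have hZ : fromBlocks 1 (-X) 0 1 * fromBlocks 1 X 0 1 = (1 : Matrix (m ⊕ o) (m ⊕ o) R) := by
    simp [fromBlocks_multiply, fromBlocks_one]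
  refine ⟨fromBlocks 1 (-X) 0 1, ?_, ?_⟩
  · exact (isUnit_iff_isUnit_det _).mpr (isUnit_det_of_right_inverse hZ)
  · rw [inv_eq_right_inv hZ, fromBlocks_multiply, fromBlocks_multiply]
    simp [← hX]

end Sylvester

section PencilNormalForm

variable {R : Type*} [CommRing R] {ι m o : Type*} [Fintype ι] [DecidableEq ι] [Fintype m]
  [DecidableEq m] [Fintype o] [DecidableEq o]

theorem reindex_mul_reindex (e : m ≃ ι) (M M' : Matrix m m R) :
    reindex e e M * reindex e e M' = reindex e e (M * M') := by
  simp only [← coe_reindexAlgEquiv R R, map_mul]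

theorem isNilpotent_nonsing_inv_smul_sub_one_mul {N : Matrix o o R} (hN : IsNilpotent N) (c : R) :
    IsNilpotent ((c • N - 1)⁻¹ * N) := by
  obtain ⟨V, hV⟩ := (hN.smul c).isUnit_sub_one
  have hcomm : Commute (↑V) N := hV ▸ ((Commute.refl N).smul_left c).sub_left (Commute.one_left N)
  rw [← hV, ← coe_units_inv]
  exact hcomm.units_inv_left.isNilpotent_mul_left hN

theorem exists_isUnit_mul_mul_eq_fromBlocks (e : m ⊕ o ≃ ι) {A B : Matrix ι ι R} {z₀ : R}
    (hK : IsUnit (z₀ • B - A)) {P : Matrix ι ι R} (hP : IsUnit P) {U : Matrix m m R}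
    {N : Matrix o o R} (hU : IsUnit U) (hN : IsNilpotent N)
    (hPB : P⁻¹ * ((z₀ • B - A)⁻¹ * B) * P = reindex e e (fromBlocks U 0 0 N)) :
    ∃ S T : Matrix ι ι R, IsUnit S ∧ IsUnit T ∧
      T * A * S = reindex e e (fromBlocks (z₀ • 1 - U⁻¹) 0 0 1) ∧
      T * B * S = reindex e e (fromBlocks 1 0 0 ((z₀ • N - 1)⁻¹ * N)) := by
  have hUdet := (isUnit_iff_isUnit_det U).mp hU
  have hVdet := (isUnit_iff_isUnit_det _).mp (hN.smul z₀).isUnit_sub_one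
  set L : Matrix (m ⊕ o) (m ⊕ o) R := fromBlocks U⁻¹ 0 0 (z₀ • N - 1)⁻¹
  have hL : IsUnit L := by
    rw [isUnit_iff_isUnit_det, det_fromBlocks_zero₂₁]
    exact (isUnit_nonsing_inv_det _ hUdet).mul (isUnit_nonsing_inv_det _ hVdet)
  have hPA : P⁻¹ * ((z₀ • B - A)⁻¹ * A) * P =
      reindex e e (fromBlocks (z₀ • U - 1) 0 0 (z₀ • N - 1)) := by
    have hA : (z₀ • B - A)⁻¹ * A = z₀ • ((z₀ • B - A)⁻¹ * B) - 1 := by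
      rw [← Matrix.mul_smul, ← nonsing_inv_mul _ ((isUnit_iff_isUnit_det _).mp hK),
        ← Matrix.mul_sub, sub_sub_cancel]
    rw [hA, Matrix.mul_sub, Matrix.sub_mul, Matrix.mul_smul, Matrix.smul_mul, hPB, Matrix.mul_one,
      nonsing_inv_mul _ ((isUnit_iff_isUnit_det _).mp hP)]
    ext i j
    obtain ⟨i, rfl⟩ := e.surjective i
    obtain ⟨j, rfl⟩ := e.surjective j
    rcases i with i | i <;> rcases j with j | j <;> simp [one_apply]
  refine ⟨P, reindex e e L * P⁻¹ * (z₀ • B - A)⁻¹, hP, ?_, ?_, ?_⟩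
  · exact ((hL.map (reindexAlgEquiv R R e)).mul (isUnit_nonsing_inv_iff.mpr hP)).mul
      (isUnit_nonsing_inv_iff.mpr hK)
  · calc reindex e e L * P⁻¹ * (z₀ • B - A)⁻¹ * A * P
        = reindex e e L * (P⁻¹ * ((z₀ • B - A)⁻¹ * A) * P) := by simp only [Matrix.mul_assoc]
      _ = _ := by
        rw [hPA, reindex_mul_reindex, fromBlocks_multiply]
        simp [Matrix.mul_sub, nonsing_inv_mul _ hUdet, nonsing_inv_mul _ hVdet]
  · calc reindex e e L * P⁻¹ * (z₀ • B - A)⁻¹ * B * P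
        = reindex e e L * (P⁻¹ * ((z₀ • B - A)⁻¹ * B) * P) := by simp only [Matrix.mul_assoc]
      _ = _ := by
        rw [hPB, reindex_mul_reindex, fromBlocks_multiply]
        simp [nonsing_inv_mul _ hUdet]

end PencilNormalForm

theorem IsUpperTriangular.exists_isUnit_conj_reindex_fromBlocks {K : Type*} [Field K] {n d : ℕ}
    {M : Matrix (Fin n) (Fin n) K} (hM : M.IsUpperTriangular) (hd : d ≤ n)
    (hsorted : ∀ i, M i i ≠ 0 ↔ (i : ℕ) < d) :
    ∃ (Z : Matrix (Fin n) (Fin n) K) (U : Matrix (Fin d) (Fin d) K)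
      (N : Matrix (Fin (n - d)) (Fin (n - d)) K), IsUnit Z ∧ U.IsUpperTriangular ∧ IsUnit U ∧
      N.IsUpperTriangular ∧ IsNilpotent N ∧
      Z⁻¹ * M * Z = reindex (finSumSubEquiv hd) (finSumSubEquiv hd) (fromBlocks U 0 0 N) := by
  have hUt := hM.submatrix_of_strictMono (strictMono_finSumSubEquiv_inl hd)
  have hNt := hM.submatrix_of_strictMono (strictMono_finSumSubEquiv_inr hd)
  have hU := hUt.isUnit fun i => ((hsorted _).mpr (by simp)).isUnit
  have hN := hNt.isNilpotent fun i => not_not.mp fun h => by simpa using (hsorted _).mp h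
  obtain ⟨Z, hZ, hconj⟩ := exists_isUnit_conj_fromBlocks_eq hU hN
    (M.submatrix (finSumSubEquiv hd ∘ .inl) (finSumSubEquiv hd ∘ .inr))
  have hlower : ∀ i j, M (finSumSubEquiv hd (.inr i)) (finSumSubEquiv hd (.inl j)) = 0 :=
    fun i j => hM (Fin.lt_def.mpr (by simp; omega))
  refine ⟨reindex _ _ Z, _, _, hZ.map (reindexAlgEquiv K K (finSumSubEquiv hd)), hUt, hU, hNt, hN,
    ?_⟩
  conv_lhs => rw [eq_reindex_fromBlocks_submatrix _ hlower]
  rw [inv_reindex, reindex_mul_reindex, reindex_mul_reindex, hconj]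

end Matrix

/-- **Weierstrass canonical form.** If the pencil `zB − A` is regular
(i.e. `det (z₀ • B − A) ≠ 0` for some `z₀ ∈ ℂ`), then there exist `d ≤ n`, invertible
matrices `S, T`, an upper-triangular `J ∈ ℂ^{d×d}` and a nilpotent upper-triangular
`N ∈ ℂ^{(n−d)×(n−d)}` with `T·A·S = diag(J, I_{n−d})` and `T·B·S = diag(I_d, N)`. -/
theorem stmt_1 (n : ℕ) (A B : Matrix (Fin n) (Fin n) ℂ)
    (hreg : ∃ z₀ : ℂ, (z₀ • B - A).det ≠ 0) :
    ∃ (d : ℕ) (hd : d ≤ n) (S T : Matrix (Fin n) (Fin n) ℂ)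
      (J : Matrix (Fin d) (Fin d) ℂ)
      (N : Matrix (Fin (n - d)) (Fin (n - d)) ℂ),
      IsUnit S ∧ IsUnit T ∧
      J.BlockTriangular id ∧
      N.BlockTriangular id ∧ IsNilpotent N ∧
      T * A * S =
        (Matrix.reindex (finSumFinEquiv.trans (finCongr (Nat.add_sub_cancel' hd)))
          (finSumFinEquiv.trans (finCongr (Nat.add_sub_cancel' hd))))
          (Matrix.fromBlocks J 0 0 1) ∧
      T * B * S =
        (Matrix.reindex (finSumFinEquiv.trans (finCongr (Nat.add_sub_cancel' hd)))
          (finSumFinEquiv.trans (finCongr (Nat.add_sub_cancel' hd))))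
          (Matrix.fromBlocks 1 0 0 N) := by
  obtain ⟨z₀, hz₀⟩ := hreg
  have hK : IsUnit (z₀ • B - A) := (isUnit_iff_isUnit_det _).mpr hz₀.isUnit
  obtain ⟨Q, d, hQ, hd, hQt, hsorted⟩ :=
    exists_isUnit_conj_isUpperTriangular_sorted (· ≠ 0) ((z₀ • B - A)⁻¹ * B)
  obtain ⟨Z, U, N, hZ, hUt, hU, hNt, hN, hconj⟩ :=
    hQt.exists_isUnit_conj_reindex_fromBlocks hd hsorted
  obtain ⟨S, T, hS, hT, hA, hB⟩ := exists_isUnit_mul_mul_eq_fromBlocks (finSumSubEquiv hd) hK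
    (hQ.mul hZ) hU hN (by simpa only [Matrix.mul_inv_rev, Matrix.mul_assoc] using hconj)
  refine ⟨d, hd, S, T, _, _, hS, hT, (IsUpperTriangular.smul blockTriangular_one z₀).sub hUt.inv,
    (IsUpperTriangular.inv ((hNt.smul z₀).sub blockTriangular_one)).mul hNt,
    isNilpotent_nonsing_inv_smul_sub_one_mul hN z₀, hA, hB⟩
end

section
/- Let A, B ∈ ℂ^{n×n} be Hermitian with B positive definite, and let X ∈ ℂ^{n×n} be invertible with X*BX = Iₙ and X*AX = Λ = diag(λ₁,…,λₙ) with all λᵢ real. Let Γ be the circle of center γ ∈ ℂ and radius ρ > 0, and suppose |λᵢ − γ| < ρ for 1 ≤ i ≤ s and |λᵢ − γ| > ρ for s < i ≤ n. Then zB − A is invertible for every z on Γ and (1/(2π√−1)) ∮_Γ (zB − A)^{-1} dz = X_{(:,1:s)} (X_{(:,1:s)})*, where X_{(:,1:s)} denotes the n×s matrix consisting of the first s columns of X. -/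
/-!
Congruence by `X` turns the pencil into `Xᴴ (z B - A) X = diag (z - λₖ)`, so
`(z B - A)⁻¹ = X diag ((z - λₖ)⁻¹) Xᴴ` and every entry of the resolvent is a partial fraction
`∑ₖ X i k * conj (X j k) / (z - λₖ)`. Integrating term by term, `∮ (z - λₖ)⁻¹ dz` is `2πi` when
`λₖ` lies inside `Γ` and `0` when it lies outside, which leaves exactly the first `s` columns.
-/

open Matrix Metric Real
open scoped ComplexOrder

namespace Matrix

variable {n R : Type*} [Fintype n] [DecidableEq n]

theorem mul_smul_sub_mul_eq_diagonal [CommRing R] {Y A B X : Matrix n n R} {d : n → R}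
    (hB : Y * B * X = 1) (hA : Y * A * X = diagonal d) (z : R) :
    Y * (z • B - A) * X = diagonal fun k => z - d k := by
  rw [mul_sub, sub_mul, Matrix.mul_smul, Matrix.smul_mul, hB, hA]
  ext i j
  by_cases hij : i = j <;> simp [hij]

theorem mul_mul_diagonal_inv_mul_eq_one [Field R] {Y M X : Matrix n n R} {d : n → R}
    (hd : ∀ k, d k ≠ 0) (h : Y * M * X = diagonal d) :
    M * (X * diagonal (fun k => (d k)⁻¹) * Y) = 1 := by
  have : Y * (M * X * diagonal fun k => (d k)⁻¹) = 1 := by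
    rw [← Matrix.mul_assoc, ← Matrix.mul_assoc, h, diagonal_mul_diagonal, ← diagonal_one]
    exact congrArg diagonal (funext fun k => mul_inv_cancel₀ (hd k))
  simpa only [Matrix.mul_assoc] using mul_eq_one_comm.mp this

theorem isUnit_of_mul_mul_eq_diagonal [Field R] {Y M X : Matrix n n R} {d : n → R}
    (hd : ∀ k, d k ≠ 0) (h : Y * M * X = diagonal d) : IsUnit M :=
  IsUnit.of_mul_eq_one _ (mul_mul_diagonal_inv_mul_eq_one hd h)

theorem inv_apply_of_conjTranspose_mul_mul_eq_diagonal [Field R] [StarRing R]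
    {M X : Matrix n n R} {d : n → R}
    (hd : ∀ k, d k ≠ 0) (h : Xᴴ * M * X = diagonal d) (i j : n) :
    M⁻¹ i j = ∑ k, X i k * star (X j k) * (d k)⁻¹ := by
  rw [inv_eq_right_inv (mul_mul_diagonal_inv_mul_eq_one hd h), mul_apply]
  simp only [mul_diagonal, conjTranspose_apply]
  exact Finset.sum_congr rfl fun k _ => by ring

end Matrix

theorem Fin.sum_castLE_eq_sum_filter {M : Type*} [AddCommMonoid M] {s n : ℕ} (h : s ≤ n)
    (f : Fin n → M) :
    ∑ k : Fin s, f (k.castLE h) = ∑ k ∈ Finset.univ.filter (fun k : Fin n => (k : ℕ) < s), f k := by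
  refine (Finset.sum_map Finset.univ (castLEEmb h) f).symm.trans ?_
  congr 1
  ext k
  simp only [Finset.mem_map, Finset.mem_univ, true_and, Finset.mem_filter, castLEEmb_apply]
  exact ⟨by rintro ⟨k, rfl⟩; exact k.isLt, fun hk => ⟨⟨k, hk⟩, rfl⟩⟩

namespace circleIntegral

theorem integral_sub_inv_of_notMem_closedBall {c w : ℂ} {R : ℝ} (hR : 0 ≤ R)
    (hw : w ∉ closedBall c R) : (∮ z in C(c, R), (z - w)⁻¹) = 0 := by
  have hdiff : DifferentiableOn ℂ (fun z => (z - w)⁻¹) (closedBall c R) := fun z hz =>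
    ((differentiableAt_id.sub_const w).inv
      (sub_ne_zero.2 (ne_of_mem_of_not_mem hz hw))).differentiableWithinAt
  exact Complex.circleIntegral_eq_zero_of_differentiable_on_off_countable hR Set.countable_empty
    hdiff.continuousOn fun z hz => (hdiff z (ball_subset_closedBall hz.1)).differentiableAt
      (closedBall_mem_nhds_of_mem hz.1)

open Classical in
theorem integral_sub_inv_of_notMem_sphere {c w : ℂ} {R : ℝ} (hR : 0 ≤ R)
    (hw : w ∉ sphere c R) :
    (∮ z in C(c, R), (z - w)⁻¹) = if w ∈ ball c R then 2 * π * Complex.I else 0 := by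
  split_ifs with hball
  · exact integral_sub_inv_of_mem_ball hball
  · refine integral_sub_inv_of_notMem_closedBall hR ?_
    rw [← ball_union_sphere]
    exact fun h => h.elim hball hw

open Classical in
theorem integral_sum_mul_sub_inv {ι : Type*} [Fintype ι] {c : ℂ} {R : ℝ} (hR : 0 ≤ R)
    (a w : ι → ℂ) (hw : ∀ k, w k ∉ sphere c R) :
    (∮ z in C(c, R), ∑ k, a k * (z - w k)⁻¹) =
      2 * π * Complex.I * ∑ k with w k ∈ ball c R, a k := by
  have hint : ∀ k, CircleIntegrable (fun z => a k * (z - w k)⁻¹) c R := fun k =>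
    (circleIntegrable_sub_inv_iff.2 (Or.inr (by rw [abs_of_nonneg hR]; exact hw k))).const_mul _
  rw [integral_fun_sum fun k _ => hint k, Finset.sum_filter, Finset.mul_sum]
  refine Finset.sum_congr rfl fun k _ => ?_
  rw [integral_const_mul, integral_sub_inv_of_notMem_sphere hR (hw k)]
  split_ifs <;> ring

end circleIntegral

theorem stmt_3_general (n s : ℕ) (hs : s ≤ n) (A B X : Matrix (Fin n) (Fin n) ℂ)
    (lam : Fin n → ℝ)
    (hXB : Xᴴ * B * X = 1)
    (hXA : Xᴴ * A * X = Matrix.diagonal (fun i => (lam i : ℂ)))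
    (γ : ℂ) (ρ : ℝ) (hρ : 0 < ρ)
    (hin : ∀ i : Fin n, (i : ℕ) < s → ‖(lam i : ℂ) - γ‖ < ρ)
    (hout : ∀ i : Fin n, s ≤ (i : ℕ) → ρ < ‖(lam i : ℂ) - γ‖) :
    (∀ z : ℂ, ‖z - γ‖ = ρ → IsUnit (z • B - A)) ∧
    (∀ i j : Fin n,
      (1 / (2 * (Real.pi : ℂ) * Complex.I)) *
          (∮ z in C(γ, ρ), ((z • B - A)⁻¹ i j)) =
        (X.submatrix id (Fin.castLE hs) * (X.submatrix id (Fin.castLE hs))ᴴ) i j) := by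
  classical
  have hdiag := mul_smul_sub_mul_eq_diagonal hXB hXA
  have hball : ∀ k, (lam k : ℂ) ∈ ball γ ρ ↔ (k : ℕ) < s := fun k => by
    rw [mem_ball_iff_norm]
    exact ⟨fun h => not_le.1 fun hk => (hout k hk).not_gt h, hin k⟩
  have hsphere : ∀ k, (lam k : ℂ) ∉ sphere γ ρ := fun k h => by
    rw [mem_sphere_iff_norm] at h
    rcases lt_or_ge (k : ℕ) s with hk | hk
    · exact (hin k hk).ne h
    · exact (hout k hk).ne' h
  have hne : ∀ z ∈ sphere γ ρ, ∀ k, z - lam k ≠ 0 := fun z hz k =>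
    sub_ne_zero.2 fun h => hsphere k (h ▸ hz)
  refine ⟨fun z hz => isUnit_of_mul_mul_eq_diagonal
    (hne z (mem_sphere_iff_norm.2 hz)) (hdiag z), fun i j => ?_⟩
  rw [circleIntegral.integral_congr hρ.le fun z hz =>
      inv_apply_of_conjTranspose_mul_mul_eq_diagonal (hne z hz) (hdiag z) i j,
    circleIntegral.integral_sum_mul_sub_inv hρ.le _ _ hsphere,
    Finset.filter_congr fun k _ => hball k, ← Fin.sum_castLE_eq_sum_filter hs,
    one_div, inv_mul_cancel_left₀ Complex.two_pi_I_ne_zero]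
  simp [mul_apply]

/-- Let `A, B` be Hermitian with `B` positive definite, `X` invertible
with `X*BX = I`, `X*AX = diag(λ₁,…,λₙ)` real, and let `Γ` be the circle of center `γ`
and radius `ρ > 0` with `|λᵢ − γ| < ρ` for `i ≤ s` and `|λᵢ − γ| > ρ` for `i > s`.
Then `zB − A` is invertible on `Γ` and
`(1/(2π√−1)) ∮_Γ (zB − A)⁻¹ dz = X_{(:,1:s)} (X_{(:,1:s)})*`. -/
theorem stmt_3 (n s : ℕ) (hs : s ≤ n) (A B X : Matrix (Fin n) (Fin n) ℂ)
    (hA : A.IsHermitian) (hB : B.PosDef) (hX : IsUnit X)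
    (lam : Fin n → ℝ)
    (hXB : Xᴴ * B * X = 1)
    (hXA : Xᴴ * A * X = Matrix.diagonal (fun i => (lam i : ℂ)))
    (γ : ℂ) (ρ : ℝ) (hρ : 0 < ρ)
    (hin : ∀ i : Fin n, (i : ℕ) < s → ‖(lam i : ℂ) - γ‖ < ρ)
    (hout : ∀ i : Fin n, s ≤ (i : ℕ) → ρ < ‖(lam i : ℂ) - γ‖) :
    (∀ z : ℂ, ‖z - γ‖ = ρ → IsUnit (z • B - A)) ∧
    (∀ i j : Fin n,
      (1 / (2 * (Real.pi : ℂ) * Complex.I)) *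
          (∮ z in C(γ, ρ), ((z • B - A)⁻¹ i j)) =
        (X.submatrix id (Fin.castLE hs) * (X.submatrix id (Fin.castLE hs))ᴴ) i j) :=
  stmt_3_general n s hs A B X lam hXB hXA γ ρ hρ hin hout
end

section
/- Let A, B ∈ ℂ^{n×n} admit a Weierstrass decomposition T·A·S = diag(J, I_{n−d}), T·B·S = diag(I_d, N) with N nilpotent, and suppose J = diag(J₁, J₂) is block diagonal with J₁ ∈ ℂ^{s×s}. Let Y, R ∈ ℂ^{n×s}, set U = S_{(:,1:s)} (S^{-1})_{(1:s,:)} Y, Ã = R*·A·U and B̃ = R*·B·U. Then for every λ ∈ ℂ, det(λB̃ − Ã) = det(R*·(T^{-1})_{(:,1:s)}) · det(λI_s − J₁) · det((S^{-1})_{(1:s,:)} Y). -/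
open Matrix

/-- Under a Weierstrass decomposition with `J = diag(J₁, J₂)`,
with `U = S_{(:,1:s)} (S⁻¹)_{(1:s,:)} Y`, `Ã = R*·A·U`, `B̃ = R*·B·U`, for every `λ`,
`det(λB̃ − Ã) = det(R*·(T⁻¹)_{(:,1:s)}) · det(λI_s − J₁) · det((S⁻¹)_{(1:s,:)} Y)`. -/
theorem stmt_12 (n d s : ℕ) (hs : s ≤ d) (hd : d ≤ n)
    (A B S T : Matrix (Fin n) (Fin n) ℂ)
    (J : Matrix (Fin d) (Fin d) ℂ) (N : Matrix (Fin (n - d)) (Fin (n - d)) ℂ)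
    (J₁ : Matrix (Fin s) (Fin s) ℂ) (J₂ : Matrix (Fin (d - s)) (Fin (d - s)) ℂ)
    (hS : IsUnit S) (hT : IsUnit T) (hN : IsNilpotent N)
    (hA : T * A * S =
      (Matrix.reindex (finSumFinEquiv.trans (finCongr (Nat.add_sub_cancel' hd)))
        (finSumFinEquiv.trans (finCongr (Nat.add_sub_cancel' hd))))
        (Matrix.fromBlocks J 0 0 1))
    (hB : T * B * S =
      (Matrix.reindex (finSumFinEquiv.trans (finCongr (Nat.add_sub_cancel' hd)))
        (finSumFinEquiv.trans (finCongr (Nat.add_sub_cancel' hd))))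
        (Matrix.fromBlocks 1 0 0 N))
    (hJ : J =
      (Matrix.reindex (finSumFinEquiv.trans (finCongr (Nat.add_sub_cancel' hs)))
        (finSumFinEquiv.trans (finCongr (Nat.add_sub_cancel' hs))))
        (Matrix.fromBlocks J₁ 0 0 J₂))
    (Y R : Matrix (Fin n) (Fin s) ℂ)
    (U : Matrix (Fin n) (Fin s) ℂ)
    (hU : U = S.submatrix id (Fin.castLE (hs.trans hd)) *
      (S⁻¹.submatrix (Fin.castLE (hs.trans hd)) id * Y)) :
    ∀ lam : ℂ,
      (lam • (Rᴴ * B * U) - Rᴴ * A * U).det =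
        (Rᴴ * T⁻¹.submatrix id (Fin.castLE (hs.trans hd))).det *
          ((lam • (1 : Matrix (Fin s) (Fin s) ℂ) - J₁).det *
            (S⁻¹.submatrix (Fin.castLE (hs.trans hd)) id * Y).det) := by
  intro lam
  set e : Fin d ⊕ Fin (n - d) ≃ Fin n :=
    finSumFinEquiv.trans (finCongr (Nat.add_sub_cancel' hd)) with he_def
  set e' : Fin s ⊕ Fin (d - s) ≃ Fin d :=
    finSumFinEquiv.trans (finCongr (Nat.add_sub_cancel' hs)) with he'_def
  set f : Fin s → Fin n := Fin.castLE (hs.trans hd) with hf_def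
  have hTd : IsUnit T.det := (Matrix.isUnit_iff_isUnit_det T).mp hT
  have hef : ∀ j : Fin s, e (Sum.inl (Fin.castLE hs j)) = f j := by
    intro j
    apply Fin.ext
    simp [he_def, hf_def]
  have hes : ∀ j : Fin s, e.symm (f j) = Sum.inl (Fin.castLE hs j) := by
    intro j
    rw [Equiv.symm_apply_eq, hef]
  have he'f : ∀ j : Fin s, e' (Sum.inl j) = Fin.castLE hs j := by
    intro j
    apply Fin.ext
    simp [he'_def]
  have he's : ∀ j : Fin s, e'.symm (Fin.castLE hs j) = Sum.inl j := by
    intro j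
    rw [Equiv.symm_apply_eq, he'f]
  -- B * E = T⁻¹ columns
  have hBE : B * S.submatrix id f = T⁻¹.submatrix id f := by
    have h1 : B * S = T⁻¹ * Matrix.reindex e e (Matrix.fromBlocks 1 0 0 N) := by
      rw [← hB, ← Matrix.mul_assoc, ← Matrix.mul_assoc, Matrix.nonsing_inv_mul T hTd,
        Matrix.one_mul]
    ext i j
    have h2 : (B * S.submatrix id f) i j = (B * S) i (f j) := by
      simp [Matrix.mul_apply]
    rw [h2, h1]
    simp only [Matrix.mul_apply, Matrix.reindex_apply, Matrix.submatrix_apply, hes, id_eq]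
    rw [← Fintype.sum_equiv e (fun x => T⁻¹ i (e x) *
        Matrix.fromBlocks 1 0 0 N (e.symm (e x)) (Sum.inl (Fin.castLE hs j)))
        (fun k => T⁻¹ i k * Matrix.fromBlocks 1 0 0 N (e.symm k) (Sum.inl (Fin.castLE hs j)))
        (fun x => rfl)]
    simp only [Equiv.symm_apply_apply, Fintype.sum_sum_type]
    simp [Matrix.one_apply, mul_ite, hef]
  -- A * E = T⁻¹ columns * J₁
  have hAE : A * S.submatrix id f = T⁻¹.submatrix id f * J₁ := by
    have h1 : A * S = T⁻¹ * Matrix.reindex e e (Matrix.fromBlocks J 0 0 1) := by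
      rw [← hA, ← Matrix.mul_assoc, ← Matrix.mul_assoc, Matrix.nonsing_inv_mul T hTd,
        Matrix.one_mul]
    ext i j
    have h2 : (A * S.submatrix id f) i j = (A * S) i (f j) := by
      simp [Matrix.mul_apply]
    rw [h2, h1]
    simp only [Matrix.mul_apply, Matrix.reindex_apply, Matrix.submatrix_apply, hes, id_eq]
    rw [← Fintype.sum_equiv e (fun x => T⁻¹ i (e x) *
        Matrix.fromBlocks J 0 0 1 (e.symm (e x)) (Sum.inl (Fin.castLE hs j)))
        (fun k => T⁻¹ i k * Matrix.fromBlocks J 0 0 1 (e.symm k) (Sum.inl (Fin.castLE hs j)))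
        (fun x => rfl)]
    simp only [Equiv.symm_apply_apply, Fintype.sum_sum_type]
    have hJentry : ∀ a : Fin d, J a (Fin.castLE hs j) =
        Matrix.fromBlocks J₁ 0 0 J₂ (e'.symm a) (Sum.inl j) := by
      intro a
      rw [hJ]
      simp [he's]
    simp only [Matrix.fromBlocks_apply₁₁, Matrix.fromBlocks_apply₂₁, Matrix.zero_apply,
      mul_zero, Finset.sum_const_zero, add_zero, hJentry]
    rw [← Fintype.sum_equiv e' (fun y => T⁻¹ i (e (Sum.inl (e' y))) *
        Matrix.fromBlocks J₁ 0 0 J₂ (e'.symm (e' y)) (Sum.inl j))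
        (fun a => T⁻¹ i (e (Sum.inl a)) *
          Matrix.fromBlocks J₁ 0 0 J₂ (e'.symm a) (Sum.inl j))
        (fun y => rfl)]
    simp only [Equiv.symm_apply_apply, Fintype.sum_sum_type, Matrix.fromBlocks_apply₁₁,
      Matrix.fromBlocks_apply₂₁, Matrix.zero_apply, mul_zero, Finset.sum_const_zero, add_zero]
    have : ∀ c : Fin s, e (Sum.inl (e' (Sum.inl c))) = f c := by
      intro c
      rw [he'f, hef]
    simp [this]
  -- now the algebra
  set G : Matrix (Fin n) (Fin s) ℂ := T⁻¹.submatrix id f with hG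
  set W : Matrix (Fin s) (Fin s) ℂ := S⁻¹.submatrix f id * Y with hW
  have hBU : Rᴴ * B * U = (Rᴴ * G) * W := by
    rw [hU, ← Matrix.mul_assoc, Matrix.mul_assoc Rᴴ B, hBE]
  have hAU : Rᴴ * A * U = (Rᴴ * G) * (J₁ * W) := by
    rw [hU, ← Matrix.mul_assoc, Matrix.mul_assoc Rᴴ A, hAE, ← Matrix.mul_assoc Rᴴ G J₁,
      Matrix.mul_assoc (Rᴴ * G)]
  rw [hBU, hAU]
  have key : lam • ((Rᴴ * G) * W) - (Rᴴ * G) * (J₁ * W) =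
      (Rᴴ * G) * ((lam • (1 : Matrix (Fin s) (Fin s) ℂ) - J₁) * W) := by
    rw [Matrix.sub_mul, Matrix.mul_sub, Matrix.smul_mul, Matrix.one_mul, Matrix.mul_smul,
      Matrix.mul_assoc]
  rw [key, Matrix.det_mul, Matrix.det_mul]
end

section
/- Let A, B ∈ ℂ^{n×n} admit a Weierstrass decomposition T·A·S = diag(J, I_{n−d}), T·B·S = diag(I_d, N) with N nilpotent, and suppose J = diag(J₁, J₂) is block diagonal with J₁ ∈ ℂ^{s×s}. Let Y, R ∈ ℂ^{n×s}, set U = S_{(:,1:s)} (S^{-1})_{(1:s,:)} Y, Ã = R*·A·U and B̃ = R*·B·U, and assume that the s×s matrices R*·(T^{-1})_{(:,1:s)} and (S^{-1})_{(1:s,:)}·Y are invertible. If y ∈ ℂ^s is nonzero and λ̃ ∈ ℂ satisfy Ã·y = λ̃·B̃·y, then U·y ≠ 0, A·(U·y) = λ̃·B·(U·y), and λ̃ is an eigenvalue of J₁ (det(λ̃I_s − J₁) = 0). That is, every eigenpair (λ̃, y) of the projected pencil (Ã, B̃) yields an eigenpair (λ̃, Uy) of the pencil (A, B) whose eigenvalue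 is an eigenvalue of J₁. -/
/-!
Write `E`, `G` for the first `s` columns of `S`, `T⁻¹`. The block structure of the Weierstrass
form gives `A E = G J₁` and `B E = G`, and `U = E W` with `W = (S⁻¹)_{(1:s,:)} Y`. Hence
`R* A U = (R* G) J₁ W` and `R* B U = (R* G) W`; cancelling the invertible `R* G` turns a
projected eigenpair `(λ, y)` into the eigenvector `z = W y ≠ 0` of `J₁`, and then
`A (E z) = G J₁ z = λ G z = λ B (E z)`, with `E z ≠ 0` because `E` has the left inverse
`(S⁻¹)_{(1:s,:)}`.
-/

open Matrix

namespace Matrix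

variable {l m m₁ m₂ k : Type*} {R : Type*}

theorem mul_submatrix_id [Fintype m] [Mul R] [AddCommMonoid R]
    {n : Type*} (M : Matrix l m R) (N : Matrix m n R) (g : k → n) :
    M * N.submatrix id g = (M * N).submatrix id g := by
  simpa using (submatrix_mul M N id id g Function.bijective_id).symm

theorem reindex_fromBlocks_submatrix_inl [Fintype m₁] [DecidableEq m] [CommRing R]
    (e : m₁ ⊕ m₂ ≃ m) (P : Matrix m₁ m₁ R) (Q : Matrix m₂ m₂ R) (g : k → m₁) :
    (reindex e e (fromBlocks P 0 0 Q)).submatrix id (e ∘ Sum.inl ∘ g) =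
      (1 : Matrix m m R).submatrix id (e ∘ Sum.inl) * P.submatrix id g := by
  ext i j
  obtain ⟨x | x, rfl⟩ := e.surjective i <;> classical simp [mul_apply, one_apply]

theorem mul_submatrix_inl_of_mul_mul_eq [Fintype m] [Fintype m₁] [DecidableEq m] [CommRing R]
    {A S T : Matrix m m R} (hT : IsUnit T) (e : m₁ ⊕ m₂ ≃ m) (P : Matrix m₁ m₁ R)
    (Q : Matrix m₂ m₂ R) (h : T * A * S = reindex e e (fromBlocks P 0 0 Q)) (g : k → m₁) :
    A * S.submatrix id (e ∘ Sum.inl ∘ g) =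
      T⁻¹.submatrix id (e ∘ Sum.inl) * P.submatrix id g := by
  have hAS : A * S = T⁻¹ * reindex e e (fromBlocks P 0 0 Q) := by
    rw [← h, Matrix.mul_assoc T]
    exact (nonsing_inv_mul_cancel_left T _ ((isUnit_iff_isUnit_det T).mp hT)).symm
  rw [mul_submatrix_id, hAS, ← mul_submatrix_id, reindex_fromBlocks_submatrix_inl,
    ← Matrix.mul_assoc, mul_submatrix_id T⁻¹ 1, Matrix.mul_one]

theorem submatrix_inv_mul_submatrix [Fintype m] [DecidableEq m] [DecidableEq k] [CommRing R]
    {S : Matrix m m R} (hS : IsUnit S) {c : k → m} (hc : Function.Injective c) :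
    S⁻¹.submatrix c id * S.submatrix id c = 1 := by
  rw [← submatrix_mul _ _ _ _ _ Function.bijective_id,
    nonsing_inv_mul _ ((isUnit_iff_isUnit_det S).mp hS), submatrix_one _ hc]

variable {n s K : Type*} [Fintype n] [Fintype s] [CommRing K]

theorem mulVec_mulVec_eq_smul_of_mul_eq {A B : Matrix n n K} {E G : Matrix n s K}
    {J₁ : Matrix s s K} (hAE : A * E = G * J₁) (hBE : B * E = G) {z : s → K} {lam : K}
    (hz : J₁ *ᵥ z = lam • z) : A *ᵥ (E *ᵥ z) = lam • B *ᵥ (E *ᵥ z) := by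
  rw [mulVec_mulVec, mulVec_mulVec, hAE, hBE, ← mulVec_mulVec, hz, mulVec_smul]

theorem mulVec_eq_smul_of_projected_mulVec_eq [DecidableEq s] {A B : Matrix n n K}
    {E G : Matrix n s K} {J₁ : Matrix s s K} (hAE : A * E = G * J₁) (hBE : B * E = G)
    (L : Matrix s n K) (hLG : IsUnit (L * G)) (W : Matrix s s K) {y : s → K} {lam : K}
    (h : (L * A * (E * W)) *ᵥ y = lam • (L * B * (E * W)) *ᵥ y) :
    J₁ *ᵥ (W *ᵥ y) = lam • W *ᵥ y := by
  have hA : L * A * (E * W) = L * G * (J₁ * W) := by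
    simp only [Matrix.mul_assoc, ← Matrix.mul_assoc A, hAE]
  have hB : L * B * (E * W) = L * G * W := by
    simp only [Matrix.mul_assoc, ← Matrix.mul_assoc B, hBE]
  apply mulVec_injective_of_isUnit hLG
  rw [hA, hB] at h
  simpa only [mulVec_mulVec, mulVec_smul, Matrix.mul_assoc] using h

theorem eigen_of_projected_pencil_eigen [DecidableEq s] [IsDomain K] {A B : Matrix n n K}
    {E G : Matrix n s K} {F : Matrix s n K} {J₁ : Matrix s s K} (hAE : A * E = G * J₁)
    (hBE : B * E = G) (hFE : F * E = 1) (L : Matrix s n K) (hLG : IsUnit (L * G))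
    {W : Matrix s s K} (hW : IsUnit W) {y : s → K} {lam : K} (hy : y ≠ 0)
    (h : (L * A * (E * W)) *ᵥ y = lam • (L * B * (E * W)) *ᵥ y) :
    (E * W) *ᵥ y ≠ 0 ∧ A *ᵥ ((E * W) *ᵥ y) = lam • B *ᵥ ((E * W) *ᵥ y) ∧
      (lam • (1 : Matrix s s K) - J₁).det = 0 := by
  set z := W *ᵥ y
  have hz : J₁ *ᵥ z = lam • z := mulVec_eq_smul_of_projected_mulVec_eq hAE hBE L hLG W h
  have hz0 : z ≠ 0 := by simpa using (mulVec_injective_of_isUnit hW).ne hy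
  rw [← mulVec_mulVec]
  refine ⟨fun hEz => hz0 ?_, mulVec_mulVec_eq_smul_of_mul_eq hAE hBE hz, ?_⟩
  · have hFEz := congrArg (F *ᵥ ·) hEz
    rwa [mulVec_mulVec, hFE, one_mulVec, mulVec_zero] at hFEz
  · refine exists_mulVec_eq_zero_iff.mp ⟨z, hz0, ?_⟩
    rw [sub_mulVec, smul_mulVec, one_mulVec, hz, sub_self]

end Matrix

theorem stmt_13_general (n d s : ℕ) (hs : s ≤ d) (hd : d ≤ n)
    (A B S T : Matrix (Fin n) (Fin n) ℂ)
    (J : Matrix (Fin d) (Fin d) ℂ) (N : Matrix (Fin (n - d)) (Fin (n - d)) ℂ)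
    (J₁ : Matrix (Fin s) (Fin s) ℂ) (J₂ : Matrix (Fin (d - s)) (Fin (d - s)) ℂ)
    (hS : IsUnit S) (hT : IsUnit T)
    (hA : T * A * S =
      (Matrix.reindex (finSumFinEquiv.trans (finCongr (Nat.add_sub_cancel' hd)))
        (finSumFinEquiv.trans (finCongr (Nat.add_sub_cancel' hd))))
        (Matrix.fromBlocks J 0 0 1))
    (hB : T * B * S =
      (Matrix.reindex (finSumFinEquiv.trans (finCongr (Nat.add_sub_cancel' hd)))
        (finSumFinEquiv.trans (finCongr (Nat.add_sub_cancel' hd))))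
        (Matrix.fromBlocks 1 0 0 N))
    (hJ : J =
      (Matrix.reindex (finSumFinEquiv.trans (finCongr (Nat.add_sub_cancel' hs)))
        (finSumFinEquiv.trans (finCongr (Nat.add_sub_cancel' hs))))
        (Matrix.fromBlocks J₁ 0 0 J₂))
    (Y R : Matrix (Fin n) (Fin s) ℂ)
    (U : Matrix (Fin n) (Fin s) ℂ)
    (hU : U = S.submatrix id (Fin.castLE (hs.trans hd)) *
      (S⁻¹.submatrix (Fin.castLE (hs.trans hd)) id * Y))
    (hRT : IsUnit (Rᴴ * T⁻¹.submatrix id (Fin.castLE (hs.trans hd))))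
    (hSY : IsUnit (S⁻¹.submatrix (Fin.castLE (hs.trans hd)) id * Y)) :
    ∀ (y : Fin s → ℂ) (lam : ℂ), y ≠ 0 →
      (Rᴴ * A * U).mulVec y = lam • (Rᴴ * B * U).mulVec y →
      U.mulVec y ≠ 0 ∧
      A.mulVec (U.mulVec y) = lam • B.mulVec (U.mulVec y) ∧
      (lam • (1 : Matrix (Fin s) (Fin s) ℂ) - J₁).det = 0 := by
  intro y lam hy h
  set e := finSumFinEquiv.trans (finCongr (Nat.add_sub_cancel' hd))
  set f := finSumFinEquiv.trans (finCongr (Nat.add_sub_cancel' hs))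
  have hc : Fin.castLE (hs.trans hd) = e ∘ Sum.inl ∘ f ∘ Sum.inl := by
    funext j; ext; simp [e, f]
  have hJ₁ : J.submatrix id (f ∘ Sum.inl) =
      (1 : Matrix _ _ ℂ).submatrix id (f ∘ Sum.inl) * J₁ := by
    simpa [hJ] using reindex_fromBlocks_submatrix_inl f J₁ J₂ id
  have hAE : A * S.submatrix id (Fin.castLE (hs.trans hd)) =
      T⁻¹.submatrix id (Fin.castLE (hs.trans hd)) * J₁ := by
    rw [hc, mul_submatrix_inl_of_mul_mul_eq hT e J 1 hA, hJ₁, ← Matrix.mul_assoc,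
      mul_submatrix_id, Matrix.mul_one, submatrix_submatrix]
    rfl
  have hBE : B * S.submatrix id (Fin.castLE (hs.trans hd)) =
      T⁻¹.submatrix id (Fin.castLE (hs.trans hd)) := by
    rw [hc, mul_submatrix_inl_of_mul_mul_eq hT e 1 N hB, mul_submatrix_id, Matrix.mul_one,
      submatrix_submatrix]
    rfl
  subst hU
  exact eigen_of_projected_pencil_eigen hAE hBE
    (submatrix_inv_mul_submatrix hS (Fin.castLE_injective _)) Rᴴ hRT hSY hy h

/-- Under a Weierstrass decomposition with `J = diag(J₁, J₂)`,
`U = S_{(:,1:s)} (S⁻¹)_{(1:s,:)} Y`, `Ã = R*·A·U`, `B̃ = R*·B·U`, with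
`R*·(T⁻¹)_{(:,1:s)}` and `(S⁻¹)_{(1:s,:)}·Y` invertible: every eigenpair `(λ̃, y)` of
the projected pencil `(Ã, B̃)` with `y ≠ 0` yields `U·y ≠ 0`, `A·(Uy) = λ̃·B·(Uy)`,
and `det(λ̃ I_s − J₁) = 0`. -/
theorem stmt_13 (n d s : ℕ) (hs : s ≤ d) (hd : d ≤ n)
    (A B S T : Matrix (Fin n) (Fin n) ℂ)
    (J : Matrix (Fin d) (Fin d) ℂ) (N : Matrix (Fin (n - d)) (Fin (n - d)) ℂ)
    (J₁ : Matrix (Fin s) (Fin s) ℂ) (J₂ : Matrix (Fin (d - s)) (Fin (d - s)) ℂ)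
    (hS : IsUnit S) (hT : IsUnit T) (hN : IsNilpotent N)
    (hA : T * A * S =
      (Matrix.reindex (finSumFinEquiv.trans (finCongr (Nat.add_sub_cancel' hd)))
        (finSumFinEquiv.trans (finCongr (Nat.add_sub_cancel' hd))))
        (Matrix.fromBlocks J 0 0 1))
    (hB : T * B * S =
      (Matrix.reindex (finSumFinEquiv.trans (finCongr (Nat.add_sub_cancel' hd)))
        (finSumFinEquiv.trans (finCongr (Nat.add_sub_cancel' hd))))
        (Matrix.fromBlocks 1 0 0 N))
    (hJ : J =
      (Matrix.reindex (finSumFinEquiv.trans (finCongr (Nat.add_sub_cancel' hs)))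
        (finSumFinEquiv.trans (finCongr (Nat.add_sub_cancel' hs))))
        (Matrix.fromBlocks J₁ 0 0 J₂))
    (Y R : Matrix (Fin n) (Fin s) ℂ)
    (U : Matrix (Fin n) (Fin s) ℂ)
    (hU : U = S.submatrix id (Fin.castLE (hs.trans hd)) *
      (S⁻¹.submatrix (Fin.castLE (hs.trans hd)) id * Y))
    (hRT : IsUnit (Rᴴ * T⁻¹.submatrix id (Fin.castLE (hs.trans hd))))
    (hSY : IsUnit (S⁻¹.submatrix (Fin.castLE (hs.trans hd)) id * Y)) :
    ∀ (y : Fin s → ℂ) (lam : ℂ), y ≠ 0 →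
      (Rᴴ * A * U).mulVec y = lam • (Rᴴ * B * U).mulVec y →
      U.mulVec y ≠ 0 ∧
      A.mulVec (U.mulVec y) = lam • B.mulVec (U.mulVec y) ∧
      (lam • (1 : Matrix (Fin s) (Fin s) ℂ) - J₁).det = 0 :=
  stmt_13_general n d s hs hd A B S T J N J₁ J₂ hS hT hA hB hJ Y R U hU hRT hSY
end

section
/- Let A, B ∈ ℂ^{n×n} admit a Weierstrass decomposition T·A·S = diag(J, I_{n−d}), T·B·S = diag(I_d, N) with N nilpotent, and suppose J = diag(J₁, J₂) is block diagonal with J₁ ∈ ℂ^{s×s}. Let Y ∈ ℂ^{n×s}, set U = S_{(:,1:s)} (S^{-1})_{(1:s,:)} Y, Ā = (BU)*·A·U and B̄ = (BU)*·B·U, and assume that the s×s matrices (BU)*·(T^{-1})_{(:,1:s)} and (S^{-1})_{(1:s,:)}·Y are invertible. If y ∈ ℂ^s is nonzero and λ̄ ∈ ℂ satisfy Ā·y = λ̄·B̄·y, then U·y ≠ 0, A·(U·y) = λ̄·B·(U·y), and λ̄ is an eigenvalue of J₁ (det(λ̄I_s − J₁) = 0). -/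
/-!
With `S₁ = S_{(:,1:s)}` and `T₁ = (T⁻¹)_{(:,1:s)}`, the Weierstrass form gives `A S₁ = T₁ J₁` and
`B S₁ = T₁`. Hence, with `K = (S⁻¹)_{(1:s,:)} Y`, we have `U = S₁ K`, `Ā = M J₁ K` and `B̄ = M K`
where `M = (BU)* T₁` is invertible. So `Ā y = λ̄ B̄ y` forces `J₁ z = λ̄ z` for `z = K y ≠ 0`; then
`U y = S₁ z ≠ 0` and `A U y = T₁ J₁ z = λ̄ T₁ z = λ̄ B U y`.
-/

open Matrix Function

namespace Matrix

variable {m k p q R : Type*} [CommRing R]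

theorem mul_submatrix_id_right [Fintype m] {l o : Type*} (M : Matrix l m R) (N : Matrix m k R)
    (f : o → k) : M * N.submatrix id f = (M * N).submatrix id f := by
  simpa using (submatrix_mul M N id id f bijective_id).symm

theorem mul_one_submatrix [Fintype m] [DecidableEq m] (M : Matrix k m R) {l : Type*}
    (f : l → m) : M * (1 : Matrix m m R).submatrix id f = M.submatrix id f := by
  simpa using mul_submatrix_one (Equiv.refl m) f M

theorem reindex_fromBlocks_zero_submatrix_inl [DecidableEq m] [Fintype p] (e : p ⊕ q ≃ m)
    (X : Matrix p p R) (W : Matrix q q R) :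
    (reindex e e (fromBlocks X 0 0 W)).submatrix id (e ∘ Sum.inl) =
      (1 : Matrix m m R).submatrix id (e ∘ Sum.inl) * X := by
  classical
  ext i j
  obtain ⟨i | i, rfl⟩ := e.surjective i <;> simp [mul_apply, one_apply]

theorem mul_submatrix_inl_of_mul_mul_eq_reindex_fromBlocks [Fintype m] [DecidableEq m]
    [Fintype p] {A S T : Matrix m m R} (hT : IsUnit T) (e : p ⊕ q ≃ m) (X : Matrix p p R)
    (W : Matrix q q R) (h : T * A * S = reindex e e (fromBlocks X 0 0 W)) (g : k → p) :
    A * S.submatrix id (e ∘ Sum.inl ∘ g) = T⁻¹.submatrix id (e ∘ Sum.inl) * X.submatrix id g := by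
  have hAS : A * S = T⁻¹ * (T * A * S) := by
    rw [← Matrix.mul_assoc, ← Matrix.mul_assoc,
      nonsing_inv_mul T ((isUnit_iff_isUnit_det T).mp hT), Matrix.one_mul]
  calc A * S.submatrix id (e ∘ Sum.inl ∘ g)
      = T⁻¹ * ((reindex e e (fromBlocks X 0 0 W)).submatrix id (e ∘ Sum.inl)).submatrix id g := by
        rw [mul_submatrix_id_right, hAS, h, mul_submatrix_id_right]; rfl
    _ = T⁻¹.submatrix id (e ∘ Sum.inl) * X.submatrix id g := by
        rw [reindex_fromBlocks_zero_submatrix_inl, ← mul_submatrix_id_right, ← Matrix.mul_assoc,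
          mul_one_submatrix]

theorem mulVec_injective_submatrix_id [Fintype m] [DecidableEq m] [Fintype k] {S : Matrix m m R}
    (hS : IsUnit S) {f : k → m} (hf : Injective f) : Injective (S.submatrix id f).mulVec := by
  classical
  set P := (1 : Matrix m m R).submatrix id f
  have hP : (1 : Matrix m m R).submatrix f id * P = 1 := by
    rw [← submatrix_mul _ _ _ _ _ bijective_id, Matrix.mul_one, submatrix_one _ hf]
  have hSP : (S.submatrix id f).mulVec = S.mulVec ∘ P.mulVec := by
    funext v
    rw [← mul_one_submatrix, Function.comp_apply, mulVec_mulVec]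
  have hPinj : Injective P.mulVec :=
    LeftInverse.injective (g := ((1 : Matrix m m R).submatrix f id).mulVec) fun v => by
      rw [mulVec_mulVec, hP, one_mulVec]
  rw [hSP]
  exact (mulVec_injective_of_isUnit hS).comp hPinj

variable [Fintype m] [Fintype k] [DecidableEq k]

theorem mulVec_eq_smul_of_projected_pencil {A B : Matrix m m R} {X W : Matrix m k R}
    {Λ C : Matrix k k R} (Z : Matrix k m R) (hAX : A * X = W * Λ) (hBX : B * X = W)
    (hZW : IsUnit (Z * W)) {y : k → R} {lam : R}
    (h : (Z * A * (X * C)) *ᵥ y = lam • (Z * B * (X * C)) *ᵥ y) :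
    Λ *ᵥ (C *ᵥ y) = lam • C *ᵥ y := by
  apply mulVec_injective_of_isUnit hZW
  have hA : Z * A * (X * C) = Z * W * Λ * C := by
    rw [Matrix.mul_assoc, ← Matrix.mul_assoc A, hAX]; simp only [Matrix.mul_assoc]
  have hB : Z * B * (X * C) = Z * W * C := by
    rw [Matrix.mul_assoc, ← Matrix.mul_assoc B, hBX, Matrix.mul_assoc]
  rw [hA, hB] at h
  simpa only [mulVec_mulVec, mulVec_smul, Matrix.mul_assoc] using h

theorem eigenpair_of_projected_pencil [IsDomain R] {A B : Matrix m m R} {X W : Matrix m k R}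
    {Λ C : Matrix k k R} (Z : Matrix k m R) (hAX : A * X = W * Λ) (hBX : B * X = W)
    (hX : Injective X.mulVec) (hZW : IsUnit (Z * W)) (hC : IsUnit C) {y : k → R} {lam : R}
    (hy : y ≠ 0) (h : (Z * A * (X * C)) *ᵥ y = lam • (Z * B * (X * C)) *ᵥ y) :
    (X * C) *ᵥ y ≠ 0 ∧ A *ᵥ ((X * C) *ᵥ y) = lam • B *ᵥ ((X * C) *ᵥ y) ∧
      (lam • (1 : Matrix k k R) - Λ).det = 0 := by
  have hΛ := mulVec_eq_smul_of_projected_pencil Z hAX hBX hZW h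
  set z := C *ᵥ y
  have hz : z ≠ 0 := by
    simpa using (mulVec_injective_of_isUnit hC).ne hy
  have hXC : (X * C) *ᵥ y = X *ᵥ z := (mulVec_mulVec y X C).symm
  clear_value z
  refine ⟨?_, ?_, ?_⟩
  · simpa [hXC] using hX.ne hz
  · calc A *ᵥ ((X * C) *ᵥ y) = W *ᵥ (Λ *ᵥ z) := by rw [hXC, mulVec_mulVec, hAX, mulVec_mulVec]
      _ = lam • B *ᵥ ((X * C) *ᵥ y) := by rw [hΛ, mulVec_smul, hXC, mulVec_mulVec, hBX]
  · exact exists_mulVec_eq_zero_iff.mp ⟨z, hz, by simp [sub_mulVec, smul_mulVec, hΛ]⟩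

end Matrix

theorem stmt_14_general (n d s : ℕ) (hs : s ≤ d) (hd : d ≤ n)
    (A B S T : Matrix (Fin n) (Fin n) ℂ)
    (J : Matrix (Fin d) (Fin d) ℂ) (N : Matrix (Fin (n - d)) (Fin (n - d)) ℂ)
    (J₁ : Matrix (Fin s) (Fin s) ℂ) (J₂ : Matrix (Fin (d - s)) (Fin (d - s)) ℂ)
    (hS : IsUnit S) (hT : IsUnit T)
    (hA : T * A * S =
      (Matrix.reindex (finSumFinEquiv.trans (finCongr (Nat.add_sub_cancel' hd)))
        (finSumFinEquiv.trans (finCongr (Nat.add_sub_cancel' hd))))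
        (Matrix.fromBlocks J 0 0 1))
    (hB : T * B * S =
      (Matrix.reindex (finSumFinEquiv.trans (finCongr (Nat.add_sub_cancel' hd)))
        (finSumFinEquiv.trans (finCongr (Nat.add_sub_cancel' hd))))
        (Matrix.fromBlocks 1 0 0 N))
    (hJ : J =
      (Matrix.reindex (finSumFinEquiv.trans (finCongr (Nat.add_sub_cancel' hs)))
        (finSumFinEquiv.trans (finCongr (Nat.add_sub_cancel' hs))))
        (Matrix.fromBlocks J₁ 0 0 J₂))
    (Y : Matrix (Fin n) (Fin s) ℂ)
    (U : Matrix (Fin n) (Fin s) ℂ)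
    (hU : U = S.submatrix id (Fin.castLE (hs.trans hd)) *
      (S⁻¹.submatrix (Fin.castLE (hs.trans hd)) id * Y))
    (hRT : IsUnit ((B * U)ᴴ * T⁻¹.submatrix id (Fin.castLE (hs.trans hd))))
    (hSY : IsUnit (S⁻¹.submatrix (Fin.castLE (hs.trans hd)) id * Y)) :
    ∀ (y : Fin s → ℂ) (lam : ℂ), y ≠ 0 →
      ((B * U)ᴴ * A * U).mulVec y = lam • ((B * U)ᴴ * B * U).mulVec y →
      U.mulVec y ≠ 0 ∧
      A.mulVec (U.mulVec y) = lam • B.mulVec (U.mulVec y) ∧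
      (lam • (1 : Matrix (Fin s) (Fin s) ℂ) - J₁).det = 0 := by
  intro y lam hy heig
  set eD := finSumFinEquiv.trans (finCongr (Nat.add_sub_cancel' hd))
  set eS := finSumFinEquiv.trans (finCongr (Nat.add_sub_cancel' hs))
  have hι : Fin.castLE (hs.trans hd) = eD ∘ Sum.inl ∘ (eS ∘ Sum.inl) := by
    funext i; ext; simp [eD, eS]
  have hAX : A * S.submatrix id (Fin.castLE (hs.trans hd)) =
      T⁻¹.submatrix id (Fin.castLE (hs.trans hd)) * J₁ := by
    rw [hι, mul_submatrix_inl_of_mul_mul_eq_reindex_fromBlocks hT eD J 1 hA, hJ,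
      reindex_fromBlocks_zero_submatrix_inl, ← Matrix.mul_assoc, mul_one_submatrix]
    rfl
  have hBX : B * S.submatrix id (Fin.castLE (hs.trans hd)) =
      T⁻¹.submatrix id (Fin.castLE (hs.trans hd)) := by
    rw [hι, mul_submatrix_inl_of_mul_mul_eq_reindex_fromBlocks hT eD 1 N hB, mul_one_submatrix]
    rfl
  subst hU
  exact eigenpair_of_projected_pencil _ hAX hBX
    (mulVec_injective_submatrix_id hS (Fin.castLE_injective _)) hRT hSY hy heig

/-- Under a Weierstrass decomposition with `J = diag(J₁, J₂)`,
`U = S_{(:,1:s)} (S⁻¹)_{(1:s,:)} Y`, `Ā = (BU)*·A·U`, `B̄ = (BU)*·B·U`, with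
`(BU)*·(T⁻¹)_{(:,1:s)}` and `(S⁻¹)_{(1:s,:)}·Y` invertible: every eigenpair `(λ̄, y)`
of the projected pencil `(Ā, B̄)` with `y ≠ 0` yields `U·y ≠ 0`, `A·(Uy) = λ̄·B·(Uy)`,
and `det(λ̄ I_s − J₁) = 0`. -/
theorem stmt_14 (n d s : ℕ) (hs : s ≤ d) (hd : d ≤ n)
    (A B S T : Matrix (Fin n) (Fin n) ℂ)
    (J : Matrix (Fin d) (Fin d) ℂ) (N : Matrix (Fin (n - d)) (Fin (n - d)) ℂ)
    (J₁ : Matrix (Fin s) (Fin s) ℂ) (J₂ : Matrix (Fin (d - s)) (Fin (d - s)) ℂ)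
    (hS : IsUnit S) (hT : IsUnit T) (hN : IsNilpotent N)
    (hA : T * A * S =
      (Matrix.reindex (finSumFinEquiv.trans (finCongr (Nat.add_sub_cancel' hd)))
        (finSumFinEquiv.trans (finCongr (Nat.add_sub_cancel' hd))))
        (Matrix.fromBlocks J 0 0 1))
    (hB : T * B * S =
      (Matrix.reindex (finSumFinEquiv.trans (finCongr (Nat.add_sub_cancel' hd)))
        (finSumFinEquiv.trans (finCongr (Nat.add_sub_cancel' hd))))
        (Matrix.fromBlocks 1 0 0 N))
    (hJ : J =
      (Matrix.reindex (finSumFinEquiv.trans (finCongr (Nat.add_sub_cancel' hs)))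
        (finSumFinEquiv.trans (finCongr (Nat.add_sub_cancel' hs))))
        (Matrix.fromBlocks J₁ 0 0 J₂))
    (Y : Matrix (Fin n) (Fin s) ℂ)
    (U : Matrix (Fin n) (Fin s) ℂ)
    (hU : U = S.submatrix id (Fin.castLE (hs.trans hd)) *
      (S⁻¹.submatrix (Fin.castLE (hs.trans hd)) id * Y))
    (hRT : IsUnit ((B * U)ᴴ * T⁻¹.submatrix id (Fin.castLE (hs.trans hd))))
    (hSY : IsUnit (S⁻¹.submatrix (Fin.castLE (hs.trans hd)) id * Y)) :
    ∀ (y : Fin s → ℂ) (lam : ℂ), y ≠ 0 →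
      ((B * U)ᴴ * A * U).mulVec y = lam • ((B * U)ᴴ * B * U).mulVec y →
      U.mulVec y ≠ 0 ∧
      A.mulVec (U.mulVec y) = lam • B.mulVec (U.mulVec y) ∧
      (lam • (1 : Matrix (Fin s) (Fin s) ℂ) - J₁).det = 0 :=
  stmt_14_general n d s hs hd A B S T J N J₁ J₂ hS hT hA hB hJ Y U hU hRT hSY
end

section
/- Let A, B ∈ ℂ^{n×n} admit a decomposition T·A·S = diag(J, I_{n−d}), T·B·S = diag(I_d, 0) with S, T invertible, where J ∈ ℂ^{d×d} is block diagonal in Jordan form: J = diag(J_{d₁}(λ₁),…,J_{d_m}(λ_m)) with Σ_{i=1}^m d_i = d, each block J_{d_i}(λ_i) being the d_i×d_i upper Jordan block λ_i I + (superdiagonal of ones). Fix s = d₁+⋯+d_l (the eigenvalues λ₁,…,λ_l being the targets) and assume d_i = 1 for all i > l (eigenvalues outside the region are simple). Let z₁,…,z_q ∈ ℂ with det(z_j I_d − J) ≠ 0 for all j, weights ω₁,…,ω_q ∈ ℂ, and define f̃(μ) = (1/(2π√−1)) Σ_{j=1}^q ω_j/(z_j − μ); assume |f̃(λ₁)| ≥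 |f̃(λ₂)| ≥ ⋯ ≥ |f̃(λ_m)| and f̃(λ_i) ≠ 0 for 1 ≤ i ≤ l. Let t and l' be integers with l < l' ≤ m, t = Σ_{i=1}^{l'} d_i (so s < t ≤ d), and let Y ∈ ℂ^{n×t} be such that (S^{-1})_{(1:t,:)}·Y is invertible. Set D = (1/(2π√−1)) Σ_{j=1}^q ω_j diag((z_j I_d − J)^{-1}, 0), M = S·D·S^{-1}, and define the iteration U^{(0)} = Y, U^{(k)} = M·U_{k−1} where U^{(k−1)} = U_{k−1}·R_{k−1} with R_{k−1} ∈ ℂ^{t×t} invertible. Then for each 1 ≤ j ≤ l, setting c_j = 1 + d₁+⋯+d_{j−1} (so that the c_j-th column S_{(:,c_j)} of S is an eigenvector of the pencil (A,B) for λ_j), there exists a constant τ_j ≥ 0 such that for all k ≥ 1 there exists v ∈ column space of U^{(k)} with ‖S_{(:,c_j)} − v‖₂ ≤ τ_j (|f̃(λ_{l'})| / |f̃(λ_j)|)^k; in particular ‖(I_n − Q_{(k)}) S_{(:,c_j)}‖₂ ≤ τ_j (|f̃(λ_{l'})| / |f̃(λ_j)|)^k, where Q_{(k)} is the orthogonal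 projector onto the column space of U^{(k)}. -/
open Matrix

/-- The Euclidean (ℓ²) norm of a vector in `ℂⁿ`. -/
noncomputable def e2Norm {n : ℕ} (x : Fin n → ℂ) : ℝ :=
  ‖(WithLp.equiv 2 (Fin n → ℂ)).symm x‖

/-!
In the coordinates `x = S⁻¹ y` the filter `M = S D S⁻¹` acts as `D`, which scales the block-start
vector `e_c` of the target eigenvalue `λ_j` by `μ = f̃(λ_j)`. Since `(S⁻¹)_{(1:t,:)} Y` is
invertible, some `y = Y z₀` has `S⁻¹ y = e_c + g` with `g` supported on the coordinates after `t`.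
These belong to simple eigenvalues `λ_i` with `i > l'`, which `D` scales by `f̃(λ_i)`, of modulus
at most `|f̃(λ_{l'})|`, or to the infinite part, which `D` annihilates. Hence `μ⁻ᵏ Mᵏ y` lies in
the column space of `U⁽ᵏ⁾` and differs from `S e_c = S_{(:,c)}` by `μ⁻ᵏ S Dᵏ g`, of norm at most
`‖S‖ ‖g‖ (|f̃(λ_{l'})| / |μ|)ᵏ`. An orthogonal projector onto a space containing `v` moves
`S_{(:,c)}` by at most `‖S_{(:,c)} - v‖`.
-/

open scoped Matrix.Norms.L2Operator

lemma e2Norm_nonneg {n : ℕ} (x : Fin n → ℂ) : 0 ≤ e2Norm x :=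
  norm_nonneg _

lemma e2Norm_neg {n : ℕ} (x : Fin n → ℂ) : e2Norm (-x) = e2Norm x :=
  norm_neg (WithLp.toLp 2 x)

lemma e2Norm_smul {n : ℕ} (a : ℂ) (x : Fin n → ℂ) : e2Norm (a • x) = ‖a‖ * e2Norm x :=
  norm_smul a (WithLp.toLp 2 x)

lemma e2Norm_mulVec_le {n : ℕ} (A : Matrix (Fin n) (Fin n) ℂ) (x : Fin n → ℂ) :
    e2Norm (A *ᵥ x) ≤ ‖A‖ * e2Norm x :=
  A.l2_opNorm_mulVec (WithLp.toLp 2 x)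

lemma e2Norm_le_of_forall_norm_le {n : ℕ} {u v : Fin n → ℂ} {r : ℝ} (hr : 0 ≤ r)
    (h : ∀ i, ‖u i‖ ≤ r * ‖v i‖) : e2Norm u ≤ r * e2Norm v := by
  simp only [e2Norm, EuclideanSpace.norm_eq]
  rw [← Real.sqrt_sq hr, ← Real.sqrt_mul (sq_nonneg r), Finset.mul_sum]
  gcongr with i
  simpa [mul_pow] using pow_le_pow_left₀ (norm_nonneg _) (h i) 2

lemma e2Norm_one_sub_mulVec_le {n : ℕ} {Q : Matrix (Fin n) (Fin n) ℂ} (hQ : Q.IsHermitian)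
    (hQQ : Q * Q = Q) (u : Fin n → ℂ) {v : Fin n → ℂ} (hv : v ∈ LinearMap.range Q.mulVecLin) :
    e2Norm ((1 - Q) *ᵥ u) ≤ e2Norm (u - v) := by
  have hP : IsStarProjection Q := ⟨hQQ, hQ⟩
  obtain ⟨w, rfl⟩ := hv
  have hkill : (1 - Q) *ᵥ (Q *ᵥ w) = 0 := by
    rw [mulVec_mulVec, hP.one_sub_mul_self, zero_mulVec]
  calc e2Norm ((1 - Q) *ᵥ u) = e2Norm ((1 - Q) *ᵥ (u - Q.mulVecLin w)) := by
        rw [mulVecLin_apply, mulVec_sub, hkill, sub_zero]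
    _ ≤ ‖1 - Q‖ * e2Norm (u - Q.mulVecLin w) := e2Norm_mulVec_le _ _
    _ ≤ e2Norm (u - Q.mulVecLin w) :=
        mul_le_of_le_one_left (e2Norm_nonneg _) hP.one_sub.norm_le

namespace Matrix

lemma mulVec_eq_of_mulVec_single {ι K : Type*} [Fintype ι] [DecidableEq ι] [CommSemiring K]
    {D : Matrix ι ι K} {α g : ι → K}
    (h : ∀ b, g b ≠ 0 → D *ᵥ Pi.single b 1 = α b • Pi.single b 1) :
    D *ᵥ g = fun i => α i * g i := by
  funext i
  have hterm : ∀ b, D i b * g b = if i = b then α i * g i else 0 := by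
    intro b
    by_cases hb : g b = 0
    · by_cases hib : i = b <;> simp [hb, hib]
    · have hcol := congrFun (h b hb) i
      rw [mulVec_single_one] at hcol
      by_cases hib : i = b
      · subst hib; simp_all
      · simp_all
  simp only [mulVec, dotProduct, hterm, Finset.sum_ite_eq, Finset.mem_univ, if_true]

lemma pow_mulVec_eq_of_mulVec_single {ι K : Type*} [Fintype ι] [DecidableEq ι] [CommSemiring K]
    {D : Matrix ι ι K} {α : ι → K} (k : ℕ) {g : ι → K}
    (h : ∀ b, g b ≠ 0 → D *ᵥ Pi.single b 1 = α b • Pi.single b 1) :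
    D ^ k *ᵥ g = fun i => α i ^ k * g i := by
  induction k generalizing g with
  | zero => funext i; simp
  | succ k ih =>
    have hsupp : ∀ b, α b * g b ≠ 0 → D *ᵥ Pi.single b 1 = α b • Pi.single b 1 :=
      fun b hb => h b (right_ne_zero_of_mul hb)
    rw [pow_succ, ← mulVec_mulVec, mulVec_eq_of_mulVec_single h, ih hsupp]
    funext i
    ring

lemma pow_mulVec_eq_of_mulVec_eq_smul {ι K : Type*} [Fintype ι] [DecidableEq ι] [CommSemiring K]
    {D : Matrix ι ι K} {v : ι → K} {μ : K} (h : D *ᵥ v = μ • v) (k : ℕ) :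
    D ^ k *ᵥ v = μ ^ k • v := by
  induction k with
  | zero => simp
  | succ k ih => rw [pow_succ, ← mulVec_mulVec, h, mulVec_smul, ih, smul_smul, pow_succ']

lemma inv_mulVec_eq_of_mulVec_eq_smul {ι K : Type*} [Fintype ι] [DecidableEq ι] [Field K]
    {B : Matrix ι ι K} (hB : IsUnit B.det) {v : ι → K} {μ : K} (h : B *ᵥ v = μ • v) :
    B⁻¹ *ᵥ v = μ⁻¹ • v := by
  have hv : v = B⁻¹ *ᵥ (B *ᵥ v) := by rw [mulVec_mulVec, nonsing_inv_mul _ hB, one_mulVec]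
  rw [h, mulVec_smul] at hv
  by_cases hμ : μ = 0
  · rw [hμ, zero_smul] at hv
    rw [hv, mulVec_zero, smul_zero]
  · rw [eq_inv_smul_iff₀ hμ, ← hv]

lemma resolvent_mulVec_eq_of_mulVec_eq_smul {ι K : Type*} [Fintype ι] [DecidableEq ι] [Field K]
    {J : Matrix ι ι K} {z : K} (hz : (z • (1 : Matrix ι ι K) - J).det ≠ 0) {v : ι → K} {θ : K}
    (h : J *ᵥ v = θ • v) :
    (z • (1 : Matrix ι ι K) - J)⁻¹ *ᵥ v = (z - θ)⁻¹ • v := by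
  refine inv_mulVec_eq_of_mulVec_eq_smul (isUnit_iff_ne_zero.mpr hz) ?_
  rw [sub_mulVec, smul_mulVec, one_mulVec, h, sub_smul]

lemma reindex_fromBlocks_zero_mulVec_single_inl {ι κ ν K : Type*} [Fintype ι] [DecidableEq ι]
    [Fintype ν] [DecidableEq ν] [CommSemiring K] (e : ι ⊕ κ ≃ ν)
    {X : Matrix ι ι K} {a : ι} {γ : K} (h : X *ᵥ Pi.single a 1 = γ • Pi.single a 1) :
    reindex e e (fromBlocks X 0 0 0) *ᵥ Pi.single (e (Sum.inl a)) 1 =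
      γ • Pi.single (e (Sum.inl a)) 1 := by
  funext i
  obtain ⟨r | r, rfl⟩ := e.surjective i
  · simpa [mulVec_single_one, Pi.single_apply] using congrFun h r
  · simp

lemma reindex_fromBlocks_zero_mulVec_single_inr {ι κ ν K : Type*}
    [Fintype ν] [DecidableEq ν] [CommSemiring K] (e : ι ⊕ κ ≃ ν)
    (X : Matrix ι ι K) (r : κ) :
    reindex e e (fromBlocks X 0 0 0) *ᵥ Pi.single (e (Sum.inr r)) 1 = 0 := by
  funext i
  obtain ⟨s | s, rfl⟩ := e.surjective i <;> simp

lemma resolventSum_mulVec_single_inl {ι κ ν σ K : Type*} [Fintype ι] [DecidableEq ι]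
    [Fintype ν] [DecidableEq ν] [Fintype σ] [Field K]
    (e : ι ⊕ κ ≃ ν) {J : Matrix ι ι K} {z : σ → K}
    (hz : ∀ j, (z j • (1 : Matrix ι ι K) - J).det ≠ 0) (w : σ → K) (c₀ : K) {a : ι} {θ : K}
    (hJ : J *ᵥ Pi.single a 1 = θ • Pi.single a 1) :
    (c₀ • ∑ j, w j • reindex e e (fromBlocks (z j • (1 : Matrix ι ι K) - J)⁻¹ 0 0 0)) *ᵥ
        Pi.single (e (Sum.inl a)) 1 =
      (c₀ * ∑ j, w j / (z j - θ)) • Pi.single (e (Sum.inl a)) 1 := by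
  simp only [smul_mulVec, sum_mulVec, reindex_fromBlocks_zero_mulVec_single_inl e
    (resolvent_mulVec_eq_of_mulVec_eq_smul (hz _) hJ), Finset.smul_sum, Finset.sum_smul,
    smul_smul, div_eq_mul_inv, Finset.mul_sum, mul_assoc]

lemma resolventSum_mulVec_single_inr {ι κ ν σ K : Type*} [Fintype ι] [DecidableEq ι]
    [Fintype ν] [DecidableEq ν] [Fintype σ] [Field K]
    (e : ι ⊕ κ ≃ ν) (J : Matrix ι ι K) (z w : σ → K) (c₀ : K) (r : κ) :
    (c₀ • ∑ j, w j • reindex e e (fromBlocks (z j • (1 : Matrix ι ι K) - J)⁻¹ 0 0 0)) *ᵥ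
        Pi.single (e (Sum.inr r)) 1 = 0 := by
  simp only [smul_mulVec, sum_mulVec, reindex_fromBlocks_zero_mulVec_single_inr, smul_zero,
    Finset.sum_const_zero]

lemma exists_mulVec_mulVec_eq_of_lt {K : Type*} [Semiring K] {n t : ℕ} (htn : t ≤ n)
    {A : Matrix (Fin n) (Fin n) K} {Y : Matrix (Fin n) (Fin t) K}
    (hY : IsUnit (A.submatrix (Fin.castLE htn) id * Y)) (v : Fin n → K) :
    ∃ z, ∀ i : Fin n, (i : ℕ) < t → (A *ᵥ (Y *ᵥ z)) i = v i := by
  obtain ⟨W, hW⟩ := hY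
  set u : Fin t → K := fun i => v (Fin.castLE htn i)
  refine ⟨(↑W⁻¹ : Matrix (Fin t) (Fin t) K) *ᵥ u, fun i hi => ?_⟩
  have hu : (A.submatrix (Fin.castLE htn) id * Y) *ᵥ
      ((↑W⁻¹ : Matrix (Fin t) (Fin t) K) *ᵥ u) = u := by
    rw [← hW, mulVec_mulVec, Units.mul_inv, one_mulVec]
  rw [mulVec_mulVec]
  exact congrFun hu ⟨i, hi⟩

lemma exists_pow_mul_eq_mul_of_iterate {ι κ R : Type*} [Fintype ι] [DecidableEq ι] [Fintype κ]
    [DecidableEq κ] [Semiring R] {M : Matrix ι ι R} {Y : Matrix ι κ R} {U Uk : ℕ → Matrix ι κ R}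
    {Rk : ℕ → Matrix κ κ R} (hUk0 : Uk 0 = Y) (hQR : ∀ k, 1 ≤ k → U k = Uk k * Rk k)
    (hIter : ∀ k, 1 ≤ k → U k = M * Uk (k - 1)) :
    ∀ k, 1 ≤ k → ∃ C : Matrix κ κ R, M ^ k * Y = U k * C := by
  intro k hk
  induction k, hk using Nat.le_induction with
  | base => exact ⟨1, by rw [pow_one, Matrix.mul_one, hIter 1 le_rfl, hUk0]⟩
  | succ k hk ih =>
    obtain ⟨C, hC⟩ := ih
    refine ⟨Rk k * C, ?_⟩
    rw [pow_succ', Matrix.mul_assoc, hC, hQR k hk, hIter (k + 1) (by omega), Nat.add_sub_cancel]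
    simp only [Matrix.mul_assoc]

end Matrix

lemma exists_le_and_lt_succ_of_lt {f : ℕ → ℕ} {r : ℕ} (h0 : f 0 ≤ r) :
    ∀ {N}, r < f N → ∃ i < N, f i ≤ r ∧ r < f (i + 1)
  | 0, h => absurd h0 (not_le.2 h)
  | N + 1, h => by
    by_cases hN : f N ≤ r
    · exact ⟨N, N.lt_succ_self, hN, h⟩
    · obtain ⟨i, hi, hfi⟩ := exists_le_and_lt_succ_of_lt h0 (not_le.1 hN)
      exact ⟨i, hi.trans N.lt_succ_self, hfi⟩

lemma Finset.sum_range_add_of_eq_one {f : ℕ → ℕ} {a k : ℕ}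
    (h : ∀ i, a ≤ i → i < a + k → f i = 1) :
    ∑ i ∈ Finset.range (a + k), f i = ∑ i ∈ Finset.range a, f i + k := by
  rw [Finset.sum_range_add, Finset.sum_congr rfl fun i hi => h (a + i) (by omega)
    (by simp at hi; omega)]
  simp

lemma exists_partialSum_eq_of_simple {cum dvec : ℕ → ℕ} {m p : ℕ}
    (hcum : ∀ i, cum i = ∑ i' ∈ Finset.range i, dvec i')
    (hsimple : ∀ i, p < i → i < m → dvec i = 1) (hpm : p < m) {b : ℕ}
    (hb : cum (p + 1) ≤ b) (hbm : b < cum m) : ∃ β, p < β ∧ β < m ∧ cum β = b := by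
  have htail : ∀ k, p + 1 + k ≤ m → cum (p + 1 + k) = cum (p + 1) + k := fun k hk => by
    rw [hcum, hcum, Finset.sum_range_add_of_eq_one]
    exact fun i hi hik => hsimple i (by omega) (by omega)
  have hm := htail (m - (p + 1)) (by omega)
  rw [show p + 1 + (m - (p + 1)) = m by omega] at hm
  exact ⟨p + 1 + (b - cum (p + 1)), by omega, by omega, by rw [htail _ (by omega)]; omega⟩

lemma partialSum_lt_partialSum {cum dvec : ℕ → ℕ} {m : ℕ}
    (hcum : ∀ i, cum i = ∑ i' ∈ Finset.range i, dvec i') (hdpos : ∀ i, i < m → 1 ≤ dvec i)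
    {β γ : ℕ} (hβ : β < m) (hβγ : β < γ) : cum β < cum γ := by
  rw [hcum, hcum]
  calc ∑ i ∈ Finset.range β, dvec i < ∑ i ∈ Finset.range (β + 1), dvec i := by
        rw [Finset.sum_range_succ]; have := hdpos β hβ; omega
    _ ≤ ∑ i ∈ Finset.range γ, dvec i :=
        Finset.sum_le_sum_of_subset (Finset.range_subset_range.2 hβγ)

lemma jordan_mulVec_single_of_blockStart {K : Type*} [Semiring K] {d m : ℕ}
    {J : Matrix (Fin d) (Fin d) K} {lam : ℕ → K} {cum dvec : ℕ → ℕ}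
    (hcum : ∀ i, cum i = ∑ i' ∈ Finset.range i, dvec i') (hdpos : ∀ i, i < m → 1 ≤ dvec i)
    (hsum : cum m = d)
    (hJ : ∀ i, i < m → ∀ a b : Fin d, cum i ≤ (a : ℕ) → (a : ℕ) < cum (i + 1) →
      J a b = if (b : ℕ) = (a : ℕ) then lam i
        else if (b : ℕ) = (a : ℕ) + 1 ∧ (b : ℕ) < cum (i + 1) then 1 else 0)
    {β : ℕ} (hβ : β < m) {a : Fin d} (ha : (a : ℕ) = cum β) :
    J *ᵥ Pi.single a 1 = lam β • Pi.single a 1 := by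
  have hmono : Monotone cum := fun i j hij => by
    rw [hcum, hcum]; exact Finset.sum_le_sum_of_subset (Finset.range_subset_range.2 hij)
  have hβ' : cum β < cum (β + 1) := partialSum_lt_partialSum hcum hdpos hβ (lt_add_one β)
  funext r
  obtain ⟨i, hi, hir, hri⟩ :=
    exists_le_and_lt_succ_of_lt (f := cum) (N := m) (by simp [hcum]) (by rw [hsum]; exact r.isLt)
  rw [mulVec_single_one, col_apply, hJ i hi r a hir hri, Pi.smul_apply, Pi.single_apply]
  by_cases hra : r = a
  · subst hra
    have hiβ : i = β := by
      have := hmono.reflect_lt (ha ▸ hri)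
      have := hmono.reflect_lt (lt_of_le_of_lt hir (ha ▸ hβ'))
      omega
    simp [hiβ]
  · have hne : (a : ℕ) ≠ r := fun h => hra (Fin.ext h.symm)
    -- `a` starts a block, so it is never the second index of a superdiagonal entry
    have hnext : ¬((a : ℕ) = r + 1 ∧ (a : ℕ) < cum (i + 1)) := by
      rintro ⟨h1, h2⟩
      have := hmono (Nat.le_of_lt_succ (hmono.reflect_lt (ha ▸ h2)))
      omega
    simp [hra, hne, hnext]

lemma e2Norm_pow_mulVec_le {n : ℕ} {D : Matrix (Fin n) (Fin n) ℂ} {g : Fin n → ℂ} {ρ : ℝ}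
    (hρ : 0 ≤ ρ)
    (h : ∀ b, g b ≠ 0 → ∃ a : ℂ, ‖a‖ ≤ ρ ∧ D *ᵥ Pi.single b 1 = a • Pi.single b 1) (k : ℕ) :
    e2Norm (D ^ k *ᵥ g) ≤ ρ ^ k * e2Norm g := by
  choose! α hαρ hα using h
  rw [pow_mulVec_eq_of_mulVec_single k hα]
  refine e2Norm_le_of_forall_norm_le (pow_nonneg hρ k) fun i => ?_
  by_cases hi : g i = 0
  · simp [hi]
  · rw [norm_mul, norm_pow]
    gcongr
    exact hαρ i hi

lemma exists_e2Norm_col_sub_inv_pow_smul_le {n : ℕ} {S D M : Matrix (Fin n) (Fin n) ℂ}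
    (hS : IsUnit S) (hM : M = S * D * S⁻¹) {c : Fin n} {μ : ℂ} (hμ : μ ≠ 0)
    (hDc : D *ᵥ Pi.single c 1 = μ • Pi.single c 1) {ρ : ℝ} (hρ : 0 ≤ ρ) (y : Fin n → ℂ)
    (hdiag : ∀ b, (S⁻¹ *ᵥ y - Pi.single c 1 : Fin n → ℂ) b ≠ 0 →
      ∃ a : ℂ, ‖a‖ ≤ ρ ∧ D *ᵥ Pi.single b 1 = a • Pi.single b 1) :
    ∃ τ, 0 ≤ τ ∧ ∀ k,
      e2Norm ((fun i => S i c) - (μ ^ k)⁻¹ • (M ^ k *ᵥ y)) ≤ τ * (ρ / ‖μ‖) ^ k := by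
  set g : Fin n → ℂ := S⁻¹ *ᵥ y - Pi.single c 1
  refine ⟨‖S‖ * e2Norm g, mul_nonneg (norm_nonneg _) (e2Norm_nonneg _), fun k => ?_⟩
  have hMk : M ^ k = S * D ^ k * S⁻¹ := by
    obtain ⟨u, rfl⟩ := hS
    rw [hM, ← coe_units_inv, Units.conj_pow]
  have hMky : M ^ k *ᵥ y = μ ^ k • (fun i => S i c) + S *ᵥ (D ^ k *ᵥ g) := by
    rw [hMk, ← mulVec_mulVec, ← mulVec_mulVec, ← add_sub_cancel (Pi.single c 1) (S⁻¹ *ᵥ y),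
      mulVec_add, pow_mulVec_eq_of_mulVec_eq_smul hDc, mulVec_add, mulVec_smul, mulVec_single_one]
    rfl
  have herr : (fun i => S i c) - (μ ^ k)⁻¹ • (M ^ k *ᵥ y) =
      -((μ ^ k)⁻¹ • (S *ᵥ (D ^ k *ᵥ g))) := by
    rw [hMky, smul_add, smul_smul, inv_mul_cancel₀ (pow_ne_zero k hμ), one_smul]
    abel
  rw [herr, e2Norm_neg, e2Norm_smul, norm_inv, norm_pow, div_pow]
  calc (‖μ‖ ^ k)⁻¹ * e2Norm (S *ᵥ (D ^ k *ᵥ g))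
      ≤ (‖μ‖ ^ k)⁻¹ * (‖S‖ * (ρ ^ k * e2Norm g)) := by
        gcongr
        exact (e2Norm_mulVec_le _ _).trans (by gcongr; exact e2Norm_pow_mulVec_le hρ hdiag k)
    _ = ‖S‖ * e2Norm g * (ρ ^ k / ‖μ‖ ^ k) := by ring

theorem stmt_17_general (n d m q l lp t : ℕ) (hd : d ≤ n) (htn : t ≤ n)
    (S Mmat D : Matrix (Fin n) (Fin n) ℂ)
    (J : Matrix (Fin d) (Fin d) ℂ)
    (dvec : ℕ → ℕ) (lam : ℕ → ℂ) (cum : ℕ → ℕ)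
    (hcum : ∀ i, cum i = ∑ i' ∈ Finset.range i, dvec i')
    (hdpos : ∀ i, i < m → 1 ≤ dvec i)
    (hsum : cum m = d)
    (hlp : l ≤ lp) (hlpm : lp < m)
    (ht : t = cum (lp + 1))
    (hsimple : ∀ i, l ≤ i → i < m → dvec i = 1)
    (hJ : ∀ i, i < m → ∀ a b : Fin d, cum i ≤ (a : ℕ) → (a : ℕ) < cum (i + 1) →
      J a b = if (b : ℕ) = (a : ℕ) then lam i
        else if (b : ℕ) = (a : ℕ) + 1 ∧ (b : ℕ) < cum (i + 1) then 1 else 0)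
    (hS : IsUnit S)
    (z w : Fin q → ℂ)
    (hz : ∀ j : Fin q, (z j • (1 : Matrix (Fin d) (Fin d) ℂ) - J).det ≠ 0)
    (ft : ℂ → ℂ)
    (hft : ∀ μ : ℂ, ft μ =
      (1 / (2 * (Real.pi : ℂ) * Complex.I)) * ∑ j : Fin q, w j / (z j - μ))
    (hord : ∀ i i', i ≤ i' → i' < m →
      ‖ft (lam i')‖ ≤ ‖ft (lam i)‖)
    (hne : ∀ i, i < l → ft (lam i) ≠ 0)
    (Y : Matrix (Fin n) (Fin t) ℂ)
    (hY : IsUnit (S⁻¹.submatrix (Fin.castLE htn) id * Y))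
    (hD : D = (1 / (2 * (Real.pi : ℂ) * Complex.I)) •
      ∑ j : Fin q, w j •
        (Matrix.reindex (finSumFinEquiv.trans (finCongr (Nat.add_sub_cancel' hd)))
          (finSumFinEquiv.trans (finCongr (Nat.add_sub_cancel' hd))))
          (Matrix.fromBlocks (z j • (1 : Matrix (Fin d) (Fin d) ℂ) - J)⁻¹ 0 0 0))
    (hM : Mmat = S * D * S⁻¹)
    (U Uk : ℕ → Matrix (Fin n) (Fin t) ℂ)
    (R : ℕ → Matrix (Fin t) (Fin t) ℂ)
    (hUk0 : Uk 0 = Y)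
    (hQR : ∀ k, 1 ≤ k → U k = Uk k * R k ∧ IsUnit (R k))
    (hIter : ∀ k, 1 ≤ k → U k = Mmat * Uk (k - 1)) :
    ∀ jj, jj < l → ∀ c : Fin n, (c : ℕ) = cum jj →
      ∃ τ : ℝ, 0 ≤ τ ∧ ∀ k, 1 ≤ k →
        (∃ v ∈ LinearMap.range (U k).mulVecLin,
          e2Norm ((fun i => S i c) - v) ≤
            τ * (‖ft (lam lp)‖ / ‖ft (lam jj)‖) ^ k) ∧
        (∀ Qk : Matrix (Fin n) (Fin n) ℂ, Qk.IsHermitian → Qk * Qk = Qk →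
          LinearMap.range Qk.mulVecLin = LinearMap.range (U k).mulVecLin →
          e2Norm ((1 - Qk).mulVec fun i => S i c) ≤
            τ * (‖ft (lam lp)‖ / ‖ft (lam jj)‖) ^ k) := by
  intro jj hjl c hc
  set E := finSumFinEquiv.trans (finCongr (Nat.add_sub_cancel' hd)) with hE
  have hcol : ∀ β < m, ∀ b : Fin n, (b : ℕ) = cum β →
      D *ᵥ Pi.single b 1 = ft (lam β) • Pi.single b 1 := by
    intro β hβ b hb
    have hbd : (b : ℕ) < d := by
      rw [hb, ← hsum]; exact partialSum_lt_partialSum hcum hdpos hβ hβ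
    have hEb : E (Sum.inl ⟨b, hbd⟩) = b := Fin.ext (by simp [hE])
    rw [hD, hft, ← hEb]
    exact resolventSum_mulVec_single_inl E hz w _
      (jordan_mulVec_single_of_blockStart hcum hdpos hsum hJ hβ hb)
  have hzero : ∀ b : Fin n, d ≤ (b : ℕ) → D *ᵥ Pi.single b 1 = 0 := by
    intro b hb
    have hEb : E (Sum.inr ⟨b - d, by omega⟩) = b := Fin.ext (by simp [hE]; omega)
    rw [hD, ← hEb]
    exact resolventSum_mulVec_single_inr E J z w _ _
  have hct : (c : ℕ) < t :=
    hc ▸ ht ▸ partialSum_lt_partialSum hcum hdpos (by omega) (by omega)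
  obtain ⟨z₀, hz₀⟩ := exists_mulVec_mulVec_eq_of_lt htn hY (Pi.single c 1)
  have hdiag : ∀ b, (S⁻¹ *ᵥ (Y *ᵥ z₀) - Pi.single c 1 : Fin n → ℂ) b ≠ 0 →
      ∃ a : ℂ, ‖a‖ ≤ ‖ft (lam lp)‖ ∧ D *ᵥ Pi.single b 1 = a • Pi.single b 1 := by
    intro b hb
    have htb : t ≤ (b : ℕ) := by
      by_contra! hbt
      exact hb (by rw [Pi.sub_apply, hz₀ b hbt, sub_self])
    rcases lt_or_ge (b : ℕ) d with hbd | hbd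
    · obtain ⟨β, hlpβ, hβm, hβb⟩ := exists_partialSum_eq_of_simple hcum
        (fun i hi => hsimple i (by omega)) hlpm (ht ▸ htb) (hsum ▸ hbd)
      exact ⟨_, hord lp β hlpβ.le hβm, hcol β hβm b hβb.symm⟩
    · exact ⟨0, by simp, by rw [hzero b hbd, zero_smul]⟩
  obtain ⟨τ, hτ, hest⟩ := exists_e2Norm_col_sub_inv_pow_smul_le hS hM (hne jj hjl)
    (hcol jj (by omega) c hc) (norm_nonneg _) _ hdiag
  refine ⟨τ, hτ, fun k hk => ?_⟩
  obtain ⟨C, hC⟩ := exists_pow_mul_eq_mul_of_iterate hUk0 (fun k hk => (hQR k hk).1) hIter k hk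
  have hv : (ft (lam jj) ^ k)⁻¹ • (Mmat ^ k *ᵥ (Y *ᵥ z₀)) ∈ LinearMap.range (U k).mulVecLin :=
    ⟨(ft (lam jj) ^ k)⁻¹ • (C *ᵥ z₀), by
      rw [mulVecLin_apply, mulVec_smul, mulVec_mulVec, mulVec_mulVec, hC]⟩
  exact ⟨⟨_, hv, hest k⟩, fun Q hQ hQQ hrange =>
    (e2Norm_one_sub_mulVec_le hQ hQQ _ (hrange ▸ hv)).trans (hest k)⟩

/-- Convergence of the filtered subspace iteration underlying the
randomized FEAST algorithm: with `T·A·S = diag(J, I_{n−d})`, `T·B·S = diag(I_d, 0)`,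
`J` block diagonal in Jordan form with blocks `J_{dᵢ}(λᵢ)` (`i = 0,…,m−1`,
0-indexed; block `i` occupies indices `cum i ≤ a < cum (i+1)` where
`cum i = d₀ + ⋯ + d_{i−1}`), target blocks `i < l`, simple eigenvalues outside
(`dᵢ = 1` for `l ≤ i < m`), filter `f̃(μ) = (1/(2π√−1)) Σ_j ω_j/(z_j − μ)` with
`|f̃(λ₀)| ≥ ⋯ ≥ |f̃(λ_{m−1})|` and `f̃(λᵢ) ≠ 0` for `i < l`, subspace size
`t = cum (lp+1)` for some `l ≤ lp < m`, starting block `Y` with `(S⁻¹)_{(1:t,:)}·Y`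
invertible, and iteration `U⁽⁰⁾ = Y`, `U⁽ᵏ⁾ = M·U_{k−1}`, `U⁽ᵏ⁻¹⁾ = U_{k−1}·R_{k−1}`
(`R_{k−1}` invertible) for the filter matrix `M = S·D·S⁻¹`,
`D = (1/(2π√−1)) Σ_j ω_j diag((z_j I_d − J)⁻¹, 0)`: for each target block `jj < l`,
writing `c = cum jj` for the index of the corresponding eigenvector column of `S`,
there is `τ ≥ 0` such that for all `k ≥ 1` there is `v` in the column space of
`U⁽ᵏ⁾` with `‖S_{(:,c)} − v‖₂ ≤ τ (|f̃(λ_{lp})|/|f̃(λ_{jj})|)ᵏ`; in particular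
`‖(I − Q₍ₖ₎) S_{(:,c)}‖₂ ≤ τ (|f̃(λ_{lp})|/|f̃(λ_{jj})|)ᵏ` for the orthogonal
projector `Q₍ₖ₎` onto the column space of `U⁽ᵏ⁾`. -/
theorem stmt_17 (n d m q l lp s t : ℕ) (hd : d ≤ n) (htn : t ≤ n)
    (A B S T Mmat D : Matrix (Fin n) (Fin n) ℂ)
    (J : Matrix (Fin d) (Fin d) ℂ)
    (dvec : ℕ → ℕ) (lam : ℕ → ℂ) (cum : ℕ → ℕ)
    (hcum : ∀ i, cum i = ∑ i' ∈ Finset.range i, dvec i')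
    (hdpos : ∀ i, i < m → 1 ≤ dvec i)
    (hsum : cum m = d)
    (hlp : l ≤ lp) (hlpm : lp < m)
    (hs : s = cum l) (ht : t = cum (lp + 1))
    (hsimple : ∀ i, l ≤ i → i < m → dvec i = 1)
    (hJ : ∀ i, i < m → ∀ a b : Fin d, cum i ≤ (a : ℕ) → (a : ℕ) < cum (i + 1) →
      J a b = if (b : ℕ) = (a : ℕ) then lam i
        else if (b : ℕ) = (a : ℕ) + 1 ∧ (b : ℕ) < cum (i + 1) then 1 else 0)
    (hS : IsUnit S) (hT : IsUnit T)
    (hA : T * A * S =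
      (Matrix.reindex (finSumFinEquiv.trans (finCongr (Nat.add_sub_cancel' hd)))
        (finSumFinEquiv.trans (finCongr (Nat.add_sub_cancel' hd))))
        (Matrix.fromBlocks J 0 0 1))
    (hB : T * B * S =
      (Matrix.reindex (finSumFinEquiv.trans (finCongr (Nat.add_sub_cancel' hd)))
        (finSumFinEquiv.trans (finCongr (Nat.add_sub_cancel' hd))))
        (Matrix.fromBlocks 1 0 0 0))
    (z w : Fin q → ℂ)
    (hz : ∀ j : Fin q, (z j • (1 : Matrix (Fin d) (Fin d) ℂ) - J).det ≠ 0)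
    (ft : ℂ → ℂ)
    (hft : ∀ μ : ℂ, ft μ =
      (1 / (2 * (Real.pi : ℂ) * Complex.I)) * ∑ j : Fin q, w j / (z j - μ))
    (hord : ∀ i i', i ≤ i' → i' < m →
      ‖ft (lam i')‖ ≤ ‖ft (lam i)‖)
    (hne : ∀ i, i < l → ft (lam i) ≠ 0)
    (Y : Matrix (Fin n) (Fin t) ℂ)
    (hY : IsUnit (S⁻¹.submatrix (Fin.castLE htn) id * Y))
    (hD : D = (1 / (2 * (Real.pi : ℂ) * Complex.I)) •
      ∑ j : Fin q, w j •
        (Matrix.reindex (finSumFinEquiv.trans (finCongr (Nat.add_sub_cancel' hd)))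
          (finSumFinEquiv.trans (finCongr (Nat.add_sub_cancel' hd))))
          (Matrix.fromBlocks (z j • (1 : Matrix (Fin d) (Fin d) ℂ) - J)⁻¹ 0 0 0))
    (hM : Mmat = S * D * S⁻¹)
    (U Uk : ℕ → Matrix (Fin n) (Fin t) ℂ)
    (R : ℕ → Matrix (Fin t) (Fin t) ℂ)
    (hU0 : U 0 = Y) (hUk0 : Uk 0 = Y)
    (hQR : ∀ k, 1 ≤ k → U k = Uk k * R k ∧ IsUnit (R k))
    (hIter : ∀ k, 1 ≤ k → U k = Mmat * Uk (k - 1)) :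
    ∀ jj, jj < l → ∀ c : Fin n, (c : ℕ) = cum jj →
      ∃ τ : ℝ, 0 ≤ τ ∧ ∀ k, 1 ≤ k →
        (∃ v ∈ LinearMap.range (U k).mulVecLin,
          e2Norm ((fun i => S i c) - v) ≤
            τ * (‖ft (lam lp)‖ / ‖ft (lam jj)‖) ^ k) ∧
        (∀ Qk : Matrix (Fin n) (Fin n) ℂ, Qk.IsHermitian → Qk * Qk = Qk →
          LinearMap.range Qk.mulVecLin = LinearMap.range (U k).mulVecLin →
          e2Norm ((1 - Qk).mulVec fun i => S i c) ≤
            τ * (‖ft (lam lp)‖ / ‖ft (lam jj)‖) ^ k) :=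
  stmt_17_general n d m q l lp t hd htn S Mmat D J dvec lam cum hcum hdpos hsum hlp hlpm ht hsimple
    hJ hS z w hz ft hft hord hne Y hY hD hM U Uk R hUk0 hQR hIter
end

section
/- Let A, B ∈ ℂ^{n×n}, λ ∈ ℂ, and x ∈ ℂ^n with A·x = λ·B·x. Let P ∈ ℂ^{n×n} be arbitrary and Q ∈ ℂ^{n×n} satisfy Q² = Q. Then, with A' = P·A·Q and B' = P·B·Q, ‖(A' − λB')·x‖₂ ≤ ‖P·(A − λB)·(I_n − Q)‖₂ · ‖(I_n − Q)·x‖₂, where ‖·‖₂ denotes the Euclidean vector norm and the induced spectral matrix norm respectively. -/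
open Matrix

noncomputable def specNorm {n : ℕ} (M : Matrix (Fin n) (Fin n) ℂ) : ℝ :=
  ‖LinearMap.toContinuousLinearMap (Matrix.toEuclideanLin M)‖

lemma key {n : ℕ} (M : Matrix (Fin n) (Fin n) ℂ) (v : Fin n → ℂ) :
    e2Norm (M.mulVec v) ≤ specNorm M * e2Norm v := by
  have he : Matrix.toEuclideanLin M ((WithLp.equiv 2 (Fin n → ℂ)).symm v)
      = (WithLp.equiv 2 (Fin n → ℂ)).symm (M.mulVec v) := by
    simp [Matrix.toEuclideanLin_apply]
  have h := (LinearMap.toContinuousLinearMap (Matrix.toEuclideanLin M)).le_opNorm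
    ((WithLp.equiv 2 (Fin n → ℂ)).symm v)
  rw [LinearMap.coe_toContinuousLinearMap', he] at h
  exact h

/-- If `A·x = λ·B·x`, `Q² = Q`, `A' = PAQ`, `B' = PBQ`, then
`‖(A' − λB')x‖₂ ≤ ‖P(A − λB)(I − Q)‖₂ · ‖(I − Q)x‖₂`. -/
theorem stmt_18 (n : ℕ) (A B P Q : Matrix (Fin n) (Fin n) ℂ) (lam : ℂ)
    (x : Fin n → ℂ) (hx : A.mulVec x = lam • B.mulVec x) (hQ : Q * Q = Q) :
    e2Norm ((P * A * Q - lam • (P * B * Q)).mulVec x) ≤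
      specNorm (P * (A - lam • B) * (1 - Q)) * e2Norm ((1 - Q).mulVec x) := by
  set M := P * (A - lam • B) with hMdef
  have h0 : M.mulVec x = 0 := by
    rw [hMdef, ← mulVec_mulVec, sub_mulVec, smul_mulVec, hx, sub_self, mulVec_zero]
  have hM : P * A * Q - lam • (P * B * Q) = M * Q := by
    rw [hMdef]
    simp only [Matrix.mul_sub, Matrix.sub_mul, Matrix.mul_smul, Matrix.smul_mul,
      Matrix.mul_assoc]
  have hproj : (1 - Q) * (1 - Q) = (1 - Q) := by
    rw [Matrix.mul_sub, Matrix.sub_mul, Matrix.sub_mul, Matrix.one_mul, Matrix.mul_one, hQ]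
    simp
  have h1 : (P * A * Q - lam • (P * B * Q)).mulVec x
      = -((M * (1 - Q)).mulVec ((1 - Q).mulVec x)) := by
    rw [hM, mulVec_mulVec, Matrix.mul_assoc M, hproj, Matrix.mul_sub, Matrix.mul_one,
      sub_mulVec, h0]
    simp
  rw [h1]
  have h2 : e2Norm (-((M * (1 - Q)).mulVec ((1 - Q).mulVec x)))
      = e2Norm ((M * (1 - Q)).mulVec ((1 - Q).mulVec x)) := by
    simp [e2Norm]
  rw [h2]
  exact key _ _
end
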